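/- arXiv:1608.08783 — 7 statements merged into one kernel-verified Lean document; each statement's English description precedes it below -/
import Mathlib

section
/- Let (X,Y) be random with Y ∈ {1,…,K}, p_k(x) = P(Y=k | X=x), and assume each p_k(X) has a continuous c.d.f. Define G(t) = ∑_{k=1}^K P(p_k(X) > t) and, for β ∈ (0,K), the oracle β-set Γ*_β(x) = {k : p_k(x) ≥ G^{-1}(β)} where G^{-1}(β) = inf{t: G(t) ≤ β}. Then E[|Γ*_β(X)|] = β. -/
open MeasureTheory

/-- With `p_k(x) = P(Y = k | X = x)` having continuous c.d.f.s,
`G t = ∑_k P(p_k(X) > t)` and the oracle β-set `Γ*_β(x) = {k : p_k(x) ≥ G⁻¹(β)}` where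
`G⁻¹(β) = inf {t : G t ≤ β}`, one has `E[|Γ*_β(X)|] = β`. -/
theorem oracle_beta_set_information
    {Ω 𝒳 : Type*} [MeasurableSpace Ω] [MeasurableSpace 𝒳]
    (μ : Measure Ω) [IsProbabilityMeasure μ]
    (K : ℕ) (hK : 0 < K)
    (X : Ω → 𝒳) (hX : Measurable X)
    (p : Fin K → 𝒳 → ℝ) (hp : ∀ k, Measurable (p k))
    (hp01 : ∀ k x, p k x ∈ Set.Icc (0:ℝ) 1)
    (hcdf : ∀ k, Continuous fun t : ℝ => (μ {ω | p k (X ω) ≤ t}).toReal)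
    (G : ℝ → ℝ) (hG : ∀ t, G t = ∑ k, (μ {ω | t < p k (X ω)}).toReal)
    (β : ℝ) (hβ : β ∈ Set.Ioo 0 (K : ℝ)) :
    ∫ ω, (Set.ncard {k : Fin K | sInf {t : ℝ | G t ≤ β} ≤ p k (X ω)} : ℝ) ∂μ = β := by
  classical
  obtain ⟨hβ0, hβK⟩ := hβ
  set S : Set ℝ := {t : ℝ | G t ≤ β} with hS
  set t₀ : ℝ := sInf S with ht₀
  have hmeasle : ∀ k (t : ℝ), MeasurableSet {ω | p k (X ω) ≤ t} := fun k t =>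
    measurableSet_le ((hp k).comp hX) measurable_const
  have hmeaslt : ∀ k (t : ℝ), MeasurableSet {ω | t < p k (X ω)} := fun k t =>
    measurableSet_lt measurable_const ((hp k).comp hX)
  have hmeasge : ∀ k (t : ℝ), MeasurableSet {ω | t ≤ p k (X ω)} := fun k t =>
    measurableSet_le measurable_const ((hp k).comp hX)
  -- complement identity
  have hcompl : ∀ k (t : ℝ),
      (μ {ω | t < p k (X ω)}).toReal = 1 - (μ {ω | p k (X ω) ≤ t}).toReal := by
    intro k t
    have hset : {ω | t < p k (X ω)} = {ω | p k (X ω) ≤ t}ᶜ := by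
      ext ω; simp [not_le]
    rw [hset, prob_compl_eq_one_sub (hmeasle k t),
      ENNReal.toReal_sub_of_le prob_le_one ENNReal.one_ne_top, ENNReal.toReal_one]
  -- G is continuous
  have hGeq : G = fun t => ∑ k : Fin K, (1 - (μ {ω | p k (X ω) ≤ t}).toReal) := by
    funext t
    rw [hG t]
    exact Finset.sum_congr rfl fun k _ => hcompl k t
  have hGc : Continuous G := by
    rw [hGeq]
    exact continuous_finset_sum _ fun k _ => continuous_const.sub (hcdf k)
  -- S is nonempty : G 1 = 0 ≤ β
  have hSne : S.Nonempty := by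
    refine ⟨1, ?_⟩
    have : G 1 = 0 := by
      rw [hG 1]
      refine Finset.sum_eq_zero fun k _ => ?_
      have : {ω | (1:ℝ) < p k (X ω)} = ∅ := by
        ext ω; simp [not_lt.mpr (hp01 k (X ω)).2]
      simp [this]
    simp only [hS, Set.mem_setOf_eq, this]
    exact le_of_lt hβ0
  -- S is bounded below by 0
  have hSbdd : BddBelow S := by
    refine ⟨0, fun t ht => ?_⟩
    by_contra h
    push_neg at h
    have : G t = (K : ℝ) := by
      rw [hG t]
      have : ∀ k : Fin K, {ω | t < p k (X ω)} = Set.univ := by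
        intro k; ext ω; simp [lt_of_lt_of_le h (hp01 k (X ω)).1]
      simp [this]
    exact absurd ht (by simp [hS, this, not_le.mpr hβK])
  -- G t₀ ≤ β
  have hle : G t₀ ≤ β := by
    have hcl : IsClosed S := isClosed_le hGc continuous_const
    exact hcl.csInf_mem hSne hSbdd
  -- β ≤ G t₀
  have hge : β ≤ G t₀ := by
    have htend : Filter.Tendsto G (nhdsWithin t₀ (Set.Iio t₀)) (nhds (G t₀)) :=
      (hGc.tendsto t₀).mono_left nhdsWithin_le_nhds
    refine ge_of_tendsto htend ?_
    filter_upwards [self_mem_nhdsWithin] with t ht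
    by_contra h
    push_neg at h
    exact absurd (csInf_le hSbdd (le_of_lt h : G t ≤ β)) (not_le.mpr ht)
  have hGt₀ : G t₀ = β := le_antisymm hle hge
  -- no atom at t₀
  have hatom : ∀ k, μ {ω | p k (X ω) = t₀} = 0 := by
    intro k
    have key : (μ {ω | p k (X ω) = t₀}).toReal ≤ 0 := by
      have htend : Filter.Tendsto
          (fun s => (μ {ω | p k (X ω) ≤ t₀}).toReal - (μ {ω | p k (X ω) ≤ s}).toReal)
          (nhdsWithin t₀ (Set.Iio t₀))
          (nhds ((μ {ω | p k (X ω) ≤ t₀}).toReal - (μ {ω | p k (X ω) ≤ t₀}).toReal)) :=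
        (continuous_const.sub (hcdf k)).tendsto t₀ |>.mono_left nhdsWithin_le_nhds
      rw [sub_self] at htend
      refine ge_of_tendsto htend ?_
      filter_upwards [self_mem_nhdsWithin] with s hs
      have hslt : s < t₀ := Set.mem_Iio.mp hs
      have hsub : {ω | p k (X ω) = t₀} ⊆ {ω | p k (X ω) ≤ t₀} \ {ω | p k (X ω) ≤ s} := by
        intro ω hω
        simp only [Set.mem_setOf_eq] at hω
        exact ⟨le_of_eq hω, by simp [Set.mem_setOf_eq, hω, not_le.mpr hslt]⟩
      have hmono : μ {ω | p k (X ω) ≤ s} ≤ μ {ω | p k (X ω) ≤ t₀} :=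
        measure_mono fun ω hω => le_trans hω (le_of_lt hslt)
      have hd : μ ({ω | p k (X ω) ≤ t₀} \ {ω | p k (X ω) ≤ s}) =
          μ {ω | p k (X ω) ≤ t₀} - μ {ω | p k (X ω) ≤ s} := by
        refine measure_diff ?_ (hmeasle k s).nullMeasurableSet (measure_ne_top μ _)
        intro ω hω
        exact le_trans hω (le_of_lt hslt)
      calc (μ {ω | p k (X ω) = t₀}).toReal
          ≤ (μ ({ω | p k (X ω) ≤ t₀} \ {ω | p k (X ω) ≤ s})).toReal :=
            ENNReal.toReal_mono (measure_ne_top μ _) (measure_mono hsub)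
        _ = (μ {ω | p k (X ω) ≤ t₀}).toReal - (μ {ω | p k (X ω) ≤ s}).toReal := by
            rw [hd]
            exact ENNReal.toReal_sub_of_le hmono (measure_ne_top μ _)
    have h0 : (μ {ω | p k (X ω) = t₀}).toReal = 0 :=
      le_antisymm key ENNReal.toReal_nonneg
    exact (ENNReal.toReal_eq_zero_iff _).mp h0 |>.resolve_right (measure_ne_top μ _)
  -- μ {t₀ ≤ p} = μ {t₀ < p}
  have hgelt : ∀ k, μ {ω | t₀ ≤ p k (X ω)} = μ {ω | t₀ < p k (X ω)} := by
    intro k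
    refine le_antisymm ?_ (measure_mono (Set.setOf_subset_setOf.mpr fun ω h => le_of_lt h))
    have hsub : {ω | t₀ ≤ p k (X ω)} ⊆ {ω | t₀ < p k (X ω)} ∪ {ω | p k (X ω) = t₀} := by
      intro ω hω
      have hω' : t₀ ≤ p k (X ω) := hω
      rcases lt_or_eq_of_le hω' with h | h
      · exact Or.inl h
      · exact Or.inr h.symm
    calc μ {ω | t₀ ≤ p k (X ω)}
        ≤ μ ({ω | t₀ < p k (X ω)} ∪ {ω | p k (X ω) = t₀}) := measure_mono hsub
      _ ≤ μ {ω | t₀ < p k (X ω)} + μ {ω | p k (X ω) = t₀} := measure_union_le _ _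
      _ = μ {ω | t₀ < p k (X ω)} := by rw [hatom k, add_zero]
  -- rewrite the integrand as a finite sum of indicators
  have hcount : ∀ ω, (Set.ncard {k : Fin K | t₀ ≤ p k (X ω)} : ℝ) =
      ∑ k : Fin K, Set.indicator {ω' | t₀ ≤ p k (X ω')} (fun _ => (1:ℝ)) ω := by
    intro ω
    have hset : {k : Fin K | t₀ ≤ p k (X ω)} =
        ↑(Finset.univ.filter fun k : Fin K => t₀ ≤ p k (X ω)) := by
      ext k; simp
    rw [hset, Set.ncard_coe_finset, Finset.card_filter]
    push_cast
    refine Finset.sum_congr rfl fun k _ => ?_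
    by_cases h : t₀ ≤ p k (X ω) <;> simp [Set.indicator_apply, h]
  calc ∫ ω, (Set.ncard {k : Fin K | t₀ ≤ p k (X ω)} : ℝ) ∂μ
      = ∫ ω, ∑ k : Fin K, Set.indicator {ω' | t₀ ≤ p k (X ω')} (fun _ => (1:ℝ)) ω ∂μ := by
        exact integral_congr_ae (Filter.Eventually.of_forall hcount)
    _ = ∑ k : Fin K, ∫ ω, Set.indicator {ω' | t₀ ≤ p k (X ω')} (fun _ => (1:ℝ)) ω ∂μ := by
        exact integral_finset_sum _ fun k _ => (integrable_const (1:ℝ)).indicator (hmeasge k t₀)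
    _ = ∑ k : Fin K, (μ {ω | t₀ ≤ p k (X ω)}).toReal := by
        refine Finset.sum_congr rfl fun k _ => ?_
        rw [integral_indicator_const (1:ℝ) (hmeasge k t₀), smul_eq_mul, mul_one, measureReal_def]
    _ = ∑ k : Fin K, (μ {ω | t₀ < p k (X ω)}).toReal := by
        exact Finset.sum_congr rfl fun k _ => by rw [hgelt k]
    _ = G t₀ := (hG t₀).symm
    _ = β := hGt₀
end

section
/- Under the setting of the oracle β-set (p_k(X) with continuous c.d.f.s, G(t) = ∑_k P(p_k(X) > t), Γ*_β(x) = {k : p_k(x) ≥ G^{-1}(β)}), for any confidence set Γ: X → 2^{{1,…,K}} with E[|Γ(X)|] = β, one has P(Y ∉ Γ*_β(X)) ≤ P(Y ∉ Γ(X)). -/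
open MeasureTheory

lemma ncard_sum_ind {K : ℕ} (S : Set (Fin K)) :
    (S.ncard : ℝ) = ∑ k, S.indicator (fun _ => (1:ℝ)) k := by
  classical
  rw [Set.ncard_eq_toFinset_card' S, Finset.card_eq_sum_ones]
  push_cast
  rw [Finset.sum_indicator_eq_sum_filter]
  congr 1
  ext k
  simp

/-- The oracle β-set `Γ*_β(x) = {k : p_k(x) ≥ G⁻¹(β)}` minimizes the risk
`P(Y ∉ Γ(X))` among all confidence sets `Γ` with information `E[|Γ(X)|] = β`. -/
theorem oracle_beta_set_optimal
    {Ω 𝒳 : Type*} [MeasurableSpace Ω] [MeasurableSpace 𝒳]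
    (μ : Measure Ω) [IsProbabilityMeasure μ]
    (K : ℕ) (hK : 0 < K)
    (X : Ω → 𝒳) (hX : Measurable X)
    (Y : Ω → Fin K) (hY : Measurable Y)
    (p : Fin K → 𝒳 → ℝ) (hp : ∀ k, Measurable (p k))
    (hp01 : ∀ k x, p k x ∈ Set.Icc (0:ℝ) 1)
    -- p_k(x) = P(Y = k | X = x):
    (hcond : ∀ k (A : Set 𝒳), MeasurableSet A →
      (μ {ω | Y ω = k ∧ X ω ∈ A}).toReal = ∫ ω in X ⁻¹' A, p k (X ω) ∂μ)
    (hcdf : ∀ k, Continuous fun t : ℝ => (μ {ω | p k (X ω) ≤ t}).toReal)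
    (G : ℝ → ℝ) (hG : ∀ t, G t = ∑ k, (μ {ω | t < p k (X ω)}).toReal)
    (β : ℝ) (hβ : β ∈ Set.Ioo 0 (K : ℝ))
    (g : ℝ) (hg : g = sInf {t : ℝ | G t ≤ β})
    (Γ : 𝒳 → Set (Fin K)) (hΓ : ∀ k, MeasurableSet {x | k ∈ Γ x})
    (hinfo : ∫ ω, (Set.ncard (Γ (X ω)) : ℝ) ∂μ = β) :
    μ {ω | Y ω ∉ {k : Fin K | g ≤ p k (X ω)}} ≤ μ {ω | Y ω ∉ Γ (X ω)} := by
  classical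
  -- sets in 𝒳
  set S : Fin K → Set 𝒳 := fun k => {x | k ∈ Γ x} with hS
  set S' : Fin K → Set 𝒳 := fun k => {x | g ≤ p k x} with hS'
  have hSm : ∀ k, MeasurableSet (S k) := hΓ
  have hS'm : ∀ k, MeasurableSet (S' k) := fun k =>
    measurableSet_le measurable_const (hp k)
  -- events
  have hEventΓ : {ω | Y ω ∈ Γ (X ω)} = ⋃ k, {ω | Y ω = k ∧ X ω ∈ S k} := by
    ext ω; simp only [Set.mem_setOf_eq, Set.mem_iUnion]
    exact ⟨fun h => ⟨Y ω, rfl, h⟩, fun ⟨k, hk, hmem⟩ => hk ▸ hmem⟩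
  have hEventΓ' : {ω | Y ω ∈ {k : Fin K | g ≤ p k (X ω)}} = ⋃ k, {ω | Y ω = k ∧ X ω ∈ S' k} := by
    ext ω; simp only [Set.mem_setOf_eq, Set.mem_iUnion]
    exact ⟨fun h => ⟨Y ω, rfl, h⟩, fun ⟨k, hk, hmem⟩ => hk ▸ hmem⟩
  have hpiece : ∀ (T : Fin K → Set 𝒳) (_ : ∀ k, MeasurableSet (T k)) (k : Fin K),
      MeasurableSet {ω | Y ω = k ∧ X ω ∈ T k} := by
    intro T hT k
    have : {ω | Y ω = k ∧ X ω ∈ T k} = Y ⁻¹' {k} ∩ X ⁻¹' (T k) := rfl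
    rw [this]
    exact (hY (measurableSet_singleton k)).inter (hX (hT k))
  have hdisj : ∀ (T : Fin K → Set 𝒳),
      Pairwise (Function.onFun Disjoint fun k => {ω | Y ω = k ∧ X ω ∈ T k}) := by
    intro T i j hij
    refine Set.disjoint_left.2 ?_
    rintro ω ⟨hi, -⟩ ⟨hj, -⟩
    exact hij (hi ▸ hj ▸ rfl)
  -- hit probability formula
  have hhit : ∀ (T : Fin K → Set 𝒳) (hT : ∀ k, MeasurableSet (T k)),
      (μ (⋃ k, {ω | Y ω = k ∧ X ω ∈ T k})).toReal
        = ∑ k, ∫ ω in X ⁻¹' (T k), p k (X ω) ∂μ := by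
    intro T hT
    rw [measure_iUnion (hdisj T) (hpiece T hT), tsum_fintype, ENNReal.toReal_sum
      (fun k _ => measure_ne_top μ _)]
    exact Finset.sum_congr rfl fun k _ => hcond k (T k) (hT k)
  -- integrability
  have hint_p : ∀ k (T : Set 𝒳), MeasurableSet T →
      Integrable (fun ω => (X ⁻¹' T).indicator (fun ω => p k (X ω)) ω) μ := by
    intro k T hT
    refine (Integrable.mono' (integrable_const 1) ?_ ?_).indicator (hX hT)
    · exact ((hp k).comp hX).aestronglyMeasurable
    · refine Filter.Eventually.of_forall fun ω => ?_
      rw [Real.norm_eq_abs, abs_le]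
      constructor
      · linarith [(hp01 k (X ω)).1]
      · exact (hp01 k (X ω)).2
  have hint_1 : ∀ (T : Set 𝒳), MeasurableSet T →
      Integrable (fun ω => (X ⁻¹' T).indicator (fun _ => (1:ℝ)) ω) μ :=
    fun T hT => (integrable_const 1).indicator (hX hT)
  -- set integral as integral of indicator
  have hsetint : ∀ k (T : Set 𝒳) (hT : MeasurableSet T),
      ∫ ω in X ⁻¹' T, p k (X ω) ∂μ
        = ∫ ω, (X ⁻¹' T).indicator (fun ω => p k (X ω)) ω ∂μ :=
    fun k T hT => (integral_indicator (hX hT)).symm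
  -- size integrals
  have hsize : ∀ (T : Fin K → Set 𝒳) (hT : ∀ k, MeasurableSet (T k)),
      ∫ ω, (∑ k, (X ⁻¹' (T k)).indicator (fun _ => (1:ℝ)) ω) ∂μ
        = ∑ k, (μ (X ⁻¹' (T k))).toReal := by
    intro T hT
    rw [integral_finset_sum _ (fun k _ => hint_1 (T k) (hT k))]
    refine Finset.sum_congr rfl fun k _ => ?_
    simp [integral_indicator (hX (hT k)), measureReal_def]
  -- info of Γ in terms of measures
  have hinfoΓ : ∑ k, (μ (X ⁻¹' (S k))).toReal = β := by
    rw [← hsize S hSm, ← hinfo]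
    refine integral_congr_ae (Filter.Eventually.of_forall fun ω => ?_)
    show (∑ k, (X ⁻¹' (S k)).indicator (fun _ => (1:ℝ)) ω) = ((Γ (X ω)).ncard : ℝ)
    rw [ncard_sum_ind]
    refine Finset.sum_congr rfl fun k _ => ?_
    by_cases h : k ∈ Γ (X ω) <;> simp [Set.indicator, h, hS]
  -- p-values are in [0,1]
  -- continuity of G
  have hGcont : Continuous G := by
    have : G = fun t => ∑ k, (1 - (μ {ω | p k (X ω) ≤ t}).toReal) := by
      funext t
      rw [hG t]
      refine Finset.sum_congr rfl fun k _ => ?_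
      have hc : {ω | t < p k (X ω)} = {ω | p k (X ω) ≤ t}ᶜ := by
        ext ω; simp [not_le]
      have hm : MeasurableSet {ω | p k (X ω) ≤ t} :=
        measurableSet_le ((hp k).comp hX) measurable_const
      rw [hc, measure_compl hm (measure_ne_top μ _), measure_univ,
        ENNReal.toReal_sub_of_le prob_le_one (by simp)]
      simp
    rw [this]
    exact continuous_finset_sum _ fun k _ => (continuous_const.sub (hcdf k))
  -- the defining set of g
  have hg_mem_nonempty : (1:ℝ) ∈ {t : ℝ | G t ≤ β} := by
    have : G 1 = 0 := by
      rw [hG]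
      refine Finset.sum_eq_zero fun k _ => ?_
      have : {ω | (1:ℝ) < p k (X ω)} = ∅ := by
        ext ω; simp only [Set.mem_setOf_eq, Set.mem_empty_iff_false, iff_false, not_lt]
        exact (hp01 k (X ω)).2
      simp [this]
    rw [Set.mem_setOf_eq, this]
    exact le_of_lt hβ.1
  have hbdd : ∀ t ∈ {t : ℝ | G t ≤ β}, (0:ℝ) ≤ t := by
    intro t ht
    by_contra hneg
    push_neg at hneg
    have : G t = K := by
      rw [hG]
      have : ∀ k : Fin K, {ω | t < p k (X ω)} = Set.univ := by
        intro k; ext ω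
        simp only [Set.mem_setOf_eq, Set.mem_univ, iff_true]
        exact lt_of_lt_of_le hneg (hp01 k (X ω)).1
      simp [this]
    rw [Set.mem_setOf_eq, this] at ht
    exact absurd (lt_of_lt_of_le hβ.2 ht) (lt_irrefl _)
  have hbddBelow : BddBelow {t : ℝ | G t ≤ β} := ⟨0, fun t ht => hbdd t ht⟩
  have hg0 : 0 ≤ g := by
    rw [hg]
    exact le_csInf ⟨1, hg_mem_nonempty⟩ hbdd
  have hGg : β ≤ G g := by
    by_contra hlt
    push_neg at hlt
    have hev : ∀ᶠ t in nhds g, G t < β :=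
      (hGcont.continuousAt).eventually_lt continuousAt_const hlt
    rw [Metric.eventually_nhds_iff] at hev
    obtain ⟨ε, hε, hball⟩ := hev
    have hmem : g - ε/2 ∈ {t : ℝ | G t ≤ β} := by
      refine le_of_lt (hball ?_)
      rw [Real.dist_eq]
      rw [abs_sub_lt_iff]
      constructor <;> linarith
    have := hg ▸ csInf_le hbddBelow hmem
    linarith
  -- null level set
  have hnull : ∀ k, μ {ω | p k (X ω) = g} = 0 := by
    intro k
    set F : ℝ → ℝ := fun t => (μ {ω | p k (X ω) ≤ t}).toReal with hF
    have hle : ∀ t, t < g → (μ {ω | p k (X ω) = g}).toReal ≤ F g - F t := by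
      intro t ht
      have hsub : {ω | p k (X ω) ≤ t} ⊆ {ω | p k (X ω) ≤ g} :=
        fun ω hω => le_trans hω (le_of_lt ht)
      have hsub2 : {ω | p k (X ω) = g} ⊆ {ω | p k (X ω) ≤ g} \ {ω | p k (X ω) ≤ t} := by
        intro ω hω
        simp only [Set.mem_setOf_eq] at hω
        exact ⟨le_of_eq hω, by simp only [Set.mem_setOf_eq, hω, not_le]; exact ht⟩
      have hdiff : μ ({ω | p k (X ω) ≤ g} \ {ω | p k (X ω) ≤ t})
          = μ {ω | p k (X ω) ≤ g} - μ {ω | p k (X ω) ≤ t} :=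
        measure_diff hsub (measurableSet_le ((hp k).comp hX) measurable_const).nullMeasurableSet
          (measure_ne_top μ _)
      calc (μ {ω | p k (X ω) = g}).toReal
          ≤ (μ ({ω | p k (X ω) ≤ g} \ {ω | p k (X ω) ≤ t})).toReal := by
            refine ENNReal.toReal_mono (measure_ne_top μ _) (measure_mono hsub2)
        _ = F g - F t := by
            rw [hdiff, ENNReal.toReal_sub_of_le (measure_mono hsub) (measure_ne_top μ _)]
    have htend : Filter.Tendsto (fun t => F g - F t) (nhdsWithin g (Set.Iio g)) (nhds 0) := by
      have h1 : Filter.Tendsto F (nhdsWithin g (Set.Iio g)) (nhds (F g)) :=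
        ((hcdf k).continuousAt).continuousWithinAt.tendsto
      have h2 : Filter.Tendsto (fun t => F g - F t) (nhdsWithin g (Set.Iio g))
          (nhds (F g - F g)) := tendsto_const_nhds.sub h1
      simpa using h2
    have hle' : (μ {ω | p k (X ω) = g}).toReal ≤ 0 := by
      refine ge_of_tendsto htend ?_
      exact eventually_nhdsWithin_of_forall fun t ht => hle t ht
    have h0 : (μ {ω | p k (X ω) = g}).toReal = 0 :=
      le_antisymm hle' ENNReal.toReal_nonneg
    exact (ENNReal.toReal_eq_zero_iff _).mp h0 |>.resolve_right (measure_ne_top μ _)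
  -- measure of S' preimage equals strict version
  have hS'measure : ∀ k, μ (X ⁻¹' (S' k)) = μ {ω | g < p k (X ω)} := by
    intro k
    have hsplit : X ⁻¹' (S' k) = {ω | g < p k (X ω)} ∪ {ω | p k (X ω) = g} := by
      ext ω
      simp only [Set.mem_preimage, hS', Set.mem_setOf_eq, Set.mem_union]
      constructor
      · intro h
        rcases lt_or_eq_of_le h with h | h
        · exact Or.inl h
        · exact Or.inr h.symm
      · rintro (h | h)
        · exact le_of_lt h
        · exact le_of_eq h.symm
    rw [hsplit]
    exact le_antisymm ((measure_union_le _ _).trans (by rw [hnull k, add_zero]))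
      (measure_mono Set.subset_union_left)
  have hsizeΓ' : ∑ k, (μ (X ⁻¹' (S' k))).toReal = G g := by
    rw [hG]
    exact Finset.sum_congr rfl fun k _ => by rw [hS'measure k]
  -- core pointwise inequality
  have hpoint : ∀ ω,
      (∑ k, (X ⁻¹' (S k)).indicator (fun ω => p k (X ω)) ω)
        + g * (∑ k, (X ⁻¹' (S' k)).indicator (fun _ => (1:ℝ)) ω)
      ≤ (∑ k, (X ⁻¹' (S' k)).indicator (fun ω => p k (X ω)) ω)
        + g * (∑ k, (X ⁻¹' (S k)).indicator (fun _ => (1:ℝ)) ω) := by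
    intro ω
    rw [Finset.mul_sum, Finset.mul_sum, ← Finset.sum_add_distrib, ← Finset.sum_add_distrib]
    refine Finset.sum_le_sum fun k _ => ?_
    by_cases h1 : g ≤ p k (X ω) <;> by_cases h2 : k ∈ Γ (X ω) <;>
      simp only [Set.indicator, Set.mem_preimage, hS, hS', Set.mem_setOf_eq, h1, h2,
        if_true, if_false, mul_one, mul_zero, add_zero, zero_add] <;>
      first
        | linarith
        | (push_neg at h1; linarith)
  -- integrate the pointwise inequality
  have hintΓp : Integrable (fun ω => ∑ k, (X ⁻¹' (S k)).indicator (fun ω => p k (X ω)) ω) μ :=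
    integrable_finset_sum _ fun k _ => hint_p k (S k) (hSm k)
  have hintΓ'p : Integrable (fun ω => ∑ k, (X ⁻¹' (S' k)).indicator (fun ω => p k (X ω)) ω) μ :=
    integrable_finset_sum _ fun k _ => hint_p k (S' k) (hS'm k)
  have hintΓ1 : Integrable (fun ω => ∑ k, (X ⁻¹' (S k)).indicator (fun _ => (1:ℝ)) ω) μ :=
    integrable_finset_sum _ fun k _ => hint_1 (S k) (hSm k)
  have hintΓ'1 : Integrable (fun ω => ∑ k, (X ⁻¹' (S' k)).indicator (fun _ => (1:ℝ)) ω) μ :=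
    integrable_finset_sum _ fun k _ => hint_1 (S' k) (hS'm k)
  have hmono : ∫ ω, ((∑ k, (X ⁻¹' (S k)).indicator (fun ω => p k (X ω)) ω)
        + g * (∑ k, (X ⁻¹' (S' k)).indicator (fun _ => (1:ℝ)) ω)) ∂μ
      ≤ ∫ ω, ((∑ k, (X ⁻¹' (S' k)).indicator (fun ω => p k (X ω)) ω)
        + g * (∑ k, (X ⁻¹' (S k)).indicator (fun _ => (1:ℝ)) ω)) ∂μ :=
    integral_mono (hintΓp.add (hintΓ'1.const_mul g)) (hintΓ'p.add (hintΓ1.const_mul g))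
      hpoint
  rw [integral_add hintΓp (hintΓ'1.const_mul g), integral_add hintΓ'p (hintΓ1.const_mul g),
    integral_const_mul, integral_const_mul, hsize S hSm, hsize S' hS'm, hinfoΓ, hsizeΓ']
    at hmono
  -- identify the two hit probabilities
  have hitΓ : (μ {ω | Y ω ∈ Γ (X ω)}).toReal
      = ∫ ω, (∑ k, (X ⁻¹' (S k)).indicator (fun ω => p k (X ω)) ω) ∂μ := by
    rw [hEventΓ, hhit S hSm, integral_finset_sum _ (fun k _ => hint_p k (S k) (hSm k))]
    exact Finset.sum_congr rfl fun k _ => hsetint k (S k) (hSm k)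
  have hitΓ' : (μ {ω | Y ω ∈ {k : Fin K | g ≤ p k (X ω)}}).toReal
      = ∫ ω, (∑ k, (X ⁻¹' (S' k)).indicator (fun ω => p k (X ω)) ω) ∂μ := by
    rw [hEventΓ', hhit S' hS'm, integral_finset_sum _ (fun k _ => hint_p k (S' k) (hS'm k))]
    exact Finset.sum_congr rfl fun k _ => hsetint k (S' k) (hS'm k)
  -- conclude: P(Y ∈ Γ(X)) ≤ P(Y ∈ Γ*(X))
  have hkey : μ {ω | Y ω ∈ Γ (X ω)} ≤ μ {ω | Y ω ∈ {k : Fin K | g ≤ p k (X ω)}} := by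
    rw [← ENNReal.toReal_le_toReal (measure_ne_top μ _) (measure_ne_top μ _)]
    rw [hitΓ, hitΓ']
    nlinarith [mul_le_mul_of_nonneg_left hGg hg0]
  -- pass to complements
  have hcompl1 : {ω | Y ω ∉ {k : Fin K | g ≤ p k (X ω)}}
      = {ω | Y ω ∈ {k : Fin K | g ≤ p k (X ω)}}ᶜ := rfl
  have hcompl2 : {ω | Y ω ∉ Γ (X ω)} = {ω | Y ω ∈ Γ (X ω)}ᶜ := rfl
  have hm1 : MeasurableSet {ω | Y ω ∈ {k : Fin K | g ≤ p k (X ω)}} := by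
    rw [hEventΓ']
    exact MeasurableSet.iUnion (hpiece S' hS'm)
  have hm2 : MeasurableSet {ω | Y ω ∈ Γ (X ω)} := by
    rw [hEventΓ]
    exact MeasurableSet.iUnion (hpiece S hSm)
  rw [hcompl1, hcompl2, measure_compl hm1 (measure_ne_top μ _),
    measure_compl hm2 (measure_ne_top μ _)]
  exact tsub_le_tsub_left hkey _
end

section
/- Under the setting of the oracle β-set, for any confidence set Γ with E[|Γ(X)|] = β, the excess risk satisfies P(Y ∉ Γ(X)) − P(Y ∉ Γ*_β(X)) = E[ ∑_{k ∈ Γ*_β(X) Δ Γ(X)} |p_k(X) − G^{-1}(β)| ], where Δ denotes symmetric difference of subsets of {1,…,K}. -/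
open MeasureTheory

lemma integrable_of_bdd' {Ω : Type*} [MeasurableSpace Ω] {μ : Measure Ω}
    [IsFiniteMeasure μ] {f : Ω → ℝ} {C : ℝ} (hf : Measurable f) (h : ∀ ω, |f ω| ≤ C) :
    Integrable f μ :=
  (integrable_const C).mono' hf.aestronglyMeasurable (ae_of_all _ h)

lemma ncard_eq_sum' {K : ℕ} (s : Set (Fin K)) :
    (s.ncard : ℝ) = ∑ k, s.indicator (fun _ => (1:ℝ)) k := by
  classical
  rw [Set.ncard_eq_toFinset_card' s]
  simp [Set.indicator_apply, Finset.sum_boole, Set.toFinset]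

lemma atom_zero' {Ω : Type*} [MeasurableSpace Ω] {μ : Measure Ω} [IsProbabilityMeasure μ]
    {f : Ω → ℝ} (hf : Measurable f)
    (hc : Continuous fun t => (μ {ω | f ω ≤ t}).toReal) (g : ℝ) :
    μ {ω | f ω = g} = 0 := by
  set c := (μ {ω | f ω = g}).toReal with hc0
  have key : ∀ s ∈ Set.Iio g, c ≤ (μ {ω | f ω ≤ g}).toReal - (μ {ω | f ω ≤ s}).toReal := by
    intro s hs
    have hdisj : Disjoint {ω | f ω ≤ s} {ω | f ω = g} := by
      rw [Set.disjoint_left]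
      intro ω h1 h2
      simp only [Set.mem_setOf_eq] at h1 h2
      rw [h2] at h1; exact absurd h1 (not_le.2 hs)
    have hsub : {ω | f ω ≤ s} ∪ {ω | f ω = g} ⊆ {ω | f ω ≤ g} := by
      rintro ω (h | h) <;> simp only [Set.mem_setOf_eq] at *
      · exact h.trans (le_of_lt hs)
      · exact le_of_eq h
    have h1 : μ {ω | f ω ≤ s} + μ {ω | f ω = g} ≤ μ {ω | f ω ≤ g} := by
      rw [← measure_union hdisj (hf (measurableSet_singleton g))]
      exact measure_mono hsub
    have h2 : (μ {ω | f ω ≤ s}).toReal + c ≤ (μ {ω | f ω ≤ g}).toReal := by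
      rw [hc0, ← ENNReal.toReal_add (measure_ne_top μ _) (measure_ne_top μ _)]
      exact ENNReal.toReal_mono (measure_ne_top μ _) h1
    linarith
  have htend : Filter.Tendsto (fun s => (μ {ω | f ω ≤ g}).toReal - (μ {ω | f ω ≤ s}).toReal)
      (nhdsWithin g (Set.Iio g)) (nhds 0) := by
    have h := ((continuous_const (y := (μ {ω | f ω ≤ g}).toReal)).sub hc).tendsto g
    convert h.mono_left nhdsWithin_le_nhds using 2 <;> simp
  have hle : c ≤ 0 :=
    ge_of_tendsto htend (eventually_nhdsWithin_of_forall key)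
  have : c = 0 := le_antisymm hle ENNReal.toReal_nonneg
  rw [hc0] at this
  exact (ENNReal.toReal_eq_zero_iff _).mp this |>.resolve_right (measure_ne_top μ _)

lemma symm_pointwise' {K : ℕ} (s t : Set (Fin K)) (q : Fin K → ℝ) (g : ℝ)
    (hs : ∀ k, k ∈ s ↔ g ≤ q k) (k : Fin K) :
    (symmDiff s t).indicator (fun k => |q k - g|) k
      = (s.indicator (fun _ => (1:ℝ)) k - t.indicator (fun _ => (1:ℝ)) k) * (q k - g) := by
  classical
  by_cases h1 : k ∈ s <;> by_cases h2 : k ∈ t <;>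
    simp only [Set.indicator_apply, Set.mem_symmDiff, h1, h2, if_true, if_false,
      not_true, not_false_iff, and_true, and_false, false_and, true_and, or_false, false_or,
      if_neg, if_pos]
  · simp [h1, h2]
  · have : g ≤ q k := (hs k).1 h1
    rw [abs_of_nonneg (by linarith)]; ring
  · have : q k < g := not_le.1 (fun h => h1 ((hs k).2 h))
    rw [abs_of_neg (by linarith)]; ring
  · simp [h1, h2]

lemma prob_notin_eq' {Ω 𝒳 : Type*} [MeasurableSpace Ω] [MeasurableSpace 𝒳]
    (μ : Measure Ω) [IsProbabilityMeasure μ]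
    (K : ℕ)
    (X : Ω → 𝒳) (hX : Measurable X)
    (Y : Ω → Fin K) (hY : Measurable Y)
    (p : Fin K → 𝒳 → ℝ)
    (hcond : ∀ k (A : Set 𝒳), MeasurableSet A →
      (μ {ω | Y ω = k ∧ X ω ∈ A}).toReal = ∫ ω in X ⁻¹' A, p k (X ω) ∂μ)
    (C : 𝒳 → Set (Fin K)) (hC : ∀ k, MeasurableSet {x | k ∈ C x}) :
    (μ {ω | Y ω ∉ C (X ω)}).toReal
      = 1 - ∑ k, ∫ ω in X ⁻¹' {x | k ∈ C x}, p k (X ω) ∂μ := by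
  classical
  set E : Fin K → Set Ω := fun k => {ω | Y ω = k ∧ X ω ∈ {x | k ∈ C x}} with hE
  have hEmeas : ∀ k, MeasurableSet (E k) := by
    intro k
    have h : E k = Y ⁻¹' {k} ∩ X ⁻¹' {x | k ∈ C x} := by
      ext ω; simp [hE, Set.mem_setOf_eq]
    rw [h]; exact (hY (measurableSet_singleton k)).inter (hX (hC k))
  have hdisj : Pairwise (Function.onFun Disjoint E) := by
    intro i j hij
    rw [Function.onFun, Set.disjoint_left]
    rintro ω ⟨h1, _⟩ ⟨h2, _⟩
    exact hij (h1 ▸ h2 ▸ rfl)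
  have hunion : {ω | Y ω ∈ C (X ω)} = ⋃ k, E k := by
    ext ω
    simp only [Set.mem_setOf_eq, Set.mem_iUnion, hE]
    constructor
    · intro h; exact ⟨Y ω, rfl, h⟩
    · rintro ⟨k, hk, h⟩; rw [hk]; exact h
  have hmeasU : MeasurableSet {ω | Y ω ∈ C (X ω)} := hunion ▸ MeasurableSet.iUnion hEmeas
  have h1 : (μ {ω | Y ω ∈ C (X ω)}).toReal = ∑ k, (μ (E k)).toReal := by
    rw [hunion, measure_iUnion hdisj hEmeas, tsum_fintype,
      ENNReal.toReal_sum (fun k _ => measure_ne_top μ _)]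
  have h3 : (μ {ω | Y ω ∉ C (X ω)}).toReal = 1 - (μ {ω | Y ω ∈ C (X ω)}).toReal := by
    have hcompl : {ω | Y ω ∉ C (X ω)} = {ω | Y ω ∈ C (X ω)}ᶜ := by ext ω; simp
    have hadd := measure_add_measure_compl (μ := μ) hmeasU
    rw [measure_univ] at hadd
    have h4 := congrArg ENNReal.toReal hadd
    rw [ENNReal.toReal_add (measure_ne_top μ _) (measure_ne_top μ _), ENNReal.toReal_one] at h4
    rw [hcompl]; linarith
  rw [h3, h1]
  congr 1
  exact Finset.sum_congr rfl fun k _ => hcond k _ (hC k)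

/-- For any confidence set `Γ` with information β, the excess risk over the oracle
β-set `Γ*_β` equals `E[∑_{k ∈ Γ*_β(X) Δ Γ(X)} |p_k(X) − G⁻¹(β)|]`. -/
theorem oracle_beta_set_excess_risk
    {Ω 𝒳 : Type*} [MeasurableSpace Ω] [MeasurableSpace 𝒳]
    (μ : Measure Ω) [IsProbabilityMeasure μ]
    (K : ℕ) (hK : 0 < K)
    (X : Ω → 𝒳) (hX : Measurable X)
    (Y : Ω → Fin K) (hY : Measurable Y)
    (p : Fin K → 𝒳 → ℝ) (hp : ∀ k, Measurable (p k))
    (hp01 : ∀ k x, p k x ∈ Set.Icc (0:ℝ) 1)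
    -- p_k(x) = P(Y = k | X = x):
    (hcond : ∀ k (A : Set 𝒳), MeasurableSet A →
      (μ {ω | Y ω = k ∧ X ω ∈ A}).toReal = ∫ ω in X ⁻¹' A, p k (X ω) ∂μ)
    (hcdf : ∀ k, Continuous fun t : ℝ => (μ {ω | p k (X ω) ≤ t}).toReal)
    (G : ℝ → ℝ) (hG : ∀ t, G t = ∑ k, (μ {ω | t < p k (X ω)}).toReal)
    (β : ℝ) (hβ : β ∈ Set.Ioo 0 (K : ℝ))
    (g : ℝ) (hg : g = sInf {t : ℝ | G t ≤ β})
    (Γstar : 𝒳 → Set (Fin K)) (hΓstar : ∀ x, Γstar x = {k : Fin K | g ≤ p k x})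
    (Γ : 𝒳 → Set (Fin K)) (hΓ : ∀ k, MeasurableSet {x | k ∈ Γ x})
    (hinfo : ∫ ω, (Set.ncard (Γ (X ω)) : ℝ) ∂μ = β) :
    (μ {ω | Y ω ∉ Γ (X ω)}).toReal - (μ {ω | Y ω ∉ Γstar (X ω)}).toReal
      = ∫ ω, ∑ k, (symmDiff (Γstar (X ω)) (Γ (X ω))).indicator
          (fun k => |p k (X ω) - g|) k ∂μ := by
  classical
  have hpm : ∀ k, Measurable fun ω => p k (X ω) := fun k => (hp k).comp hX
  -- membership criterion for Γstar
  have hmemstar : ∀ (x : 𝒳) (k : Fin K), k ∈ Γstar x ↔ g ≤ p k x := by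
    intro x k; rw [hΓstar]; exact Iff.rfl
  have hΓs : ∀ k, MeasurableSet {x | k ∈ Γstar x} := by
    intro k
    have : {x | k ∈ Γstar x} = {x | g ≤ p k x} := by
      ext x; exact hmemstar x k
    rw [this]; exact measurableSet_le measurable_const (hp k)
  -- complement formula
  have hcompl : ∀ (k : Fin K) (t : ℝ),
      (μ {ω | t < p k (X ω)}).toReal = 1 - (μ {ω | p k (X ω) ≤ t}).toReal := by
    intro k t
    have hm : MeasurableSet {ω | p k (X ω) ≤ t} := measurableSet_le (hpm k) measurable_const
    have hcc : {ω | p k (X ω) ≤ t}ᶜ = {ω | t < p k (X ω)} := by ext ω; simp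
    have hadd := measure_add_measure_compl (μ := μ) hm
    rw [measure_univ, hcc] at hadd
    have h4 := congrArg ENNReal.toReal hadd
    rw [ENNReal.toReal_add (measure_ne_top μ _) (measure_ne_top μ _), ENNReal.toReal_one] at h4
    linarith
  -- continuity of G
  have hGcont : Continuous G := by
    have h : G = fun t => ∑ k, (1 - (μ {ω | p k (X ω) ≤ t}).toReal) := by
      funext t; rw [hG]; exact Finset.sum_congr rfl fun k _ => hcompl k t
    rw [h]
    exact continuous_finset_sum _ fun k _ => continuous_const.sub (hcdf k)
  -- G g = β
  set S := {t : ℝ | G t ≤ β} with hSdef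
  have h1S : (1:ℝ) ∈ S := by
    have hz : ∀ k : Fin K, (μ {ω | (1:ℝ) < p k (X ω)}).toReal = 0 := by
      intro k
      have : {ω | (1:ℝ) < p k (X ω)} = ∅ := by
        ext ω; simp only [Set.mem_setOf_eq, Set.mem_empty_iff_false, iff_false, not_lt]
        exact (hp01 k (X ω)).2
      simp [this]
    show G 1 ≤ β
    rw [hG]
    simp only [hz, Finset.sum_const_zero]
    exact le_of_lt hβ.1
  have hlb0 : ∀ t ∈ S, (0:ℝ) ≤ t := by
    intro t ht
    by_contra h
    push_neg at h
    have hKt : G t = K := by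
      rw [hG]
      have huniv : ∀ k : Fin K, {ω | t < p k (X ω)} = Set.univ := by
        intro k; ext ω
        simp only [Set.mem_setOf_eq, Set.mem_univ, iff_true]
        exact lt_of_lt_of_le h (hp01 k (X ω)).1
      simp [huniv]
    have : G t ≤ β := ht
    rw [hKt] at this
    linarith [hβ.2]
  have hbdd : BddBelow S := ⟨0, hlb0⟩
  have hclosed : IsClosed S := IsClosed.preimage hGcont isClosed_Iic
  have hgmem : G g ≤ β := by
    have : g ∈ S := hg ▸ hclosed.csInf_mem ⟨1, h1S⟩ hbdd
    exact this
  have hgeb : β ≤ G g := by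
    have hev : ∀ t ∈ Set.Iio g, β ≤ G t := by
      intro t ht
      by_contra h
      push_neg at h
      have : g ≤ t := hg ▸ csInf_le hbdd (le_of_lt h)
      exact absurd ht (not_lt.2 this)
    exact ge_of_tendsto ((hGcont.tendsto g).mono_left nhdsWithin_le_nhds)
      (eventually_nhdsWithin_of_forall hev)
  have hGg : G g = β := le_antisymm hgmem hgeb
  -- atom at g has measure zero
  have hmeq : ∀ k, (μ {ω | g ≤ p k (X ω)}).toReal = (μ {ω | g < p k (X ω)}).toReal := by
    intro k
    have hatom : μ {ω | p k (X ω) = g} = 0 := atom_zero' (hpm k) (hcdf k) g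
    have hsub1 : {ω | g < p k (X ω)} ⊆ {ω | g ≤ p k (X ω)} := by
      intro ω h
      simp only [Set.mem_setOf_eq] at h ⊢
      exact le_of_lt h
    have hsub2 : {ω | g ≤ p k (X ω)} ⊆ {ω | g < p k (X ω)} ∪ {ω | p k (X ω) = g} := by
      intro ω h
      simp only [Set.mem_setOf_eq, Set.mem_union] at h ⊢
      rcases eq_or_lt_of_le h with h' | h'
      · exact Or.inr h'.symm
      · exact Or.inl h'
    have hle : μ {ω | g ≤ p k (X ω)} ≤ μ {ω | g < p k (X ω)} := by
      calc μ {ω | g ≤ p k (X ω)} ≤ μ ({ω | g < p k (X ω)} ∪ {ω | p k (X ω) = g}) :=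
            measure_mono hsub2
        _ ≤ μ {ω | g < p k (X ω)} + μ {ω | p k (X ω) = g} := measure_union_le _ _
        _ = μ {ω | g < p k (X ω)} := by rw [hatom, add_zero]
    exact congrArg ENNReal.toReal (le_antisymm hle (measure_mono hsub1))
  -- E|Γ*|  = β
  have hstar_sum : ∑ k, (μ {ω | g ≤ p k (X ω)}).toReal = β := by
    rw [Finset.sum_congr rfl fun k _ => hmeq k, ← hG g, hGg]
  -- indicator-valued functions and integrability
  have hmΓ : ∀ k : Fin K, MeasurableSet {ω | k ∈ Γ (X ω)} := fun k => hX (hΓ k)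
  have hmΓs : ∀ k : Fin K, MeasurableSet {ω | k ∈ Γstar (X ω)} := fun k => hX (hΓs k)
  have hmem_ind : ∀ (k : Fin K) (s : Set Ω) (c : Ω → ℝ), Measurable c →
      MeasurableSet s → Measurable (fun ω => if ω ∈ s then c ω else 0) := by
    intro k s c hc hs
    exact Measurable.ite hs hc measurable_const
  -- the four integrable pieces per k
  have hint_p : ∀ (k : Fin K) (s : Set Ω), MeasurableSet s →
      Integrable (fun ω => if ω ∈ s then p k (X ω) else 0) μ := by
    intro k s hs
    refine integrable_of_bdd' (C := 1) (Measurable.ite hs (hpm k) measurable_const) ?_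
    intro ω
    by_cases h : ω ∈ s <;> simp [h]
    exact abs_le.2 ⟨by linarith [(hp01 k (X ω)).1], (hp01 k (X ω)).2⟩
  have hint_1 : ∀ (s : Set Ω), MeasurableSet s →
      Integrable (fun ω => if ω ∈ s then (1:ℝ) else 0) μ := by
    intro s hs
    refine integrable_of_bdd' (C := 1) (Measurable.ite hs measurable_const measurable_const) ?_
    intro ω
    by_cases h : ω ∈ s <;> simp [h]
  -- notation
  set IΓp : Fin K → ℝ := fun k => ∫ ω, (if ω ∈ {ω' | k ∈ Γ (X ω')} then p k (X ω) else 0) ∂μ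
    with hIΓp
  set ISp : Fin K → ℝ := fun k => ∫ ω, (if ω ∈ {ω' | k ∈ Γstar (X ω')} then p k (X ω) else 0) ∂μ
    with hISp
  set IΓ1 : Fin K → ℝ := fun k => ∫ ω, (if ω ∈ {ω' | k ∈ Γ (X ω')} then (1:ℝ) else 0) ∂μ
    with hIΓ1
  set IS1 : Fin K → ℝ := fun k => ∫ ω, (if ω ∈ {ω' | k ∈ Γstar (X ω')} then (1:ℝ) else 0) ∂μ
    with hIS1
  -- set integrals as plain integrals
  have hset_int : ∀ (k : Fin K) (C : 𝒳 → Set (Fin K)) (hC : ∀ k, MeasurableSet {x | k ∈ C x}),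
      ∫ ω in X ⁻¹' {x | k ∈ C x}, p k (X ω) ∂μ
        = ∫ ω, (if ω ∈ {ω' | k ∈ C (X ω')} then p k (X ω) else 0) ∂μ := by
    intro k C hC
    rw [← integral_indicator (hX (hC k))]
    refine integral_congr_ae (Filter.Eventually.of_forall fun ω => ?_)
    by_cases h : k ∈ C (X ω) <;> simp [Set.indicator_apply, h]
  -- probabilities
  have hPnotΓ : (μ {ω | Y ω ∉ Γ (X ω)}).toReal = 1 - ∑ k, IΓp k := by
    rw [prob_notin_eq' μ K X hX Y hY p hcond Γ hΓ]
    congr 1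
    exact Finset.sum_congr rfl fun k _ => hset_int k Γ hΓ
  have hPnotS : (μ {ω | Y ω ∉ Γstar (X ω)}).toReal = 1 - ∑ k, ISp k := by
    rw [prob_notin_eq' μ K X hX Y hY p hcond Γstar hΓs]
    congr 1
    exact Finset.sum_congr rfl fun k _ => hset_int k Γstar hΓs
  -- indicator integrals = measures
  have hI1 : ∀ (s : Set Ω), MeasurableSet s →
      ∫ ω, (if ω ∈ s then (1:ℝ) else 0) ∂μ = (μ s).toReal := by
    intro s hs
    have : (fun ω => if ω ∈ s then (1:ℝ) else 0) = s.indicator (fun _ => (1:ℝ)) := by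
      funext ω; simp [Set.indicator_apply]
    rw [this, integral_indicator_const _ hs, smul_eq_mul, mul_one]; rfl
  -- E|Γ*| = β
  have hIS1β : ∑ k, IS1 k = β := by
    rw [← hstar_sum]
    refine Finset.sum_congr rfl fun k _ => ?_
    have hseteq : {ω | k ∈ Γstar (X ω)} = {ω | g ≤ p k (X ω)} := by
      ext ω; exact hmemstar (X ω) k
    rw [hIS1]
    simp only
    rw [hI1 _ (hmΓs k), hseteq]
  -- E|Γ| = β
  have hIΓ1β : ∑ k, IΓ1 k = β := by
    have hswap : ∑ k, IΓ1 k = ∫ ω, ∑ k, (if ω ∈ {ω' | k ∈ Γ (X ω')} then (1:ℝ) else 0) ∂μ := by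
      rw [integral_finset_sum]
      intro k _
      exact hint_1 _ (hmΓ k)
    rw [hswap, ← hinfo]
    congr 1
    funext ω
    rw [ncard_eq_sum' (Γ (X ω))]
    refine Finset.sum_congr rfl fun k _ => ?_
    by_cases h : k ∈ Γ (X ω) <;> simp [Set.indicator_apply, h]
  -- pointwise identity for the RHS integrand
  have hpt : ∀ ω, (∑ k, (symmDiff (Γstar (X ω)) (Γ (X ω))).indicator
        (fun k => |p k (X ω) - g|) k)
      = ∑ k, ((if ω ∈ {ω' | k ∈ Γstar (X ω')} then (1:ℝ) else 0)
          - (if ω ∈ {ω' | k ∈ Γ (X ω')} then (1:ℝ) else 0)) * (p k (X ω) - g) := by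
    intro ω
    refine Finset.sum_congr rfl fun k _ => ?_
    rw [symm_pointwise' (Γstar (X ω)) (Γ (X ω)) (fun k => p k (X ω)) g
      (fun k => hmemstar (X ω) k) k]
    congr 1 <;> by_cases h : k ∈ Γstar (X ω) <;> by_cases h2 : k ∈ Γ (X ω) <;>
      simp [Set.indicator_apply, h, h2]
  -- per-k expansion of the product
  have hexp : ∀ (k : Fin K),
      ∫ ω, ((if ω ∈ {ω' | k ∈ Γstar (X ω')} then (1:ℝ) else 0)
          - (if ω ∈ {ω' | k ∈ Γ (X ω')} then (1:ℝ) else 0)) * (p k (X ω) - g) ∂μ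
        = ISp k - IΓp k - g * IS1 k + g * IΓ1 k := by
    intro k
    have hfun : (fun ω => ((if ω ∈ {ω' | k ∈ Γstar (X ω')} then (1:ℝ) else 0)
          - (if ω ∈ {ω' | k ∈ Γ (X ω')} then (1:ℝ) else 0)) * (p k (X ω) - g))
        = fun ω => ((if ω ∈ {ω' | k ∈ Γstar (X ω')} then p k (X ω) else 0)
            - (if ω ∈ {ω' | k ∈ Γ (X ω')} then p k (X ω) else 0)
            - g * (if ω ∈ {ω' | k ∈ Γstar (X ω')} then (1:ℝ) else 0)
            + g * (if ω ∈ {ω' | k ∈ Γ (X ω')} then (1:ℝ) else 0)) := by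
      funext ω
      by_cases h : ω ∈ {ω' | k ∈ Γstar (X ω')} <;>
        by_cases h2 : ω ∈ {ω' | k ∈ Γ (X ω')} <;> simp [h, h2] <;> ring
    have ha : Integrable (fun ω => if ω ∈ {ω' | k ∈ Γstar (X ω')} then p k (X ω) else 0) μ :=
      hint_p k _ (hmΓs k)
    have hb : Integrable (fun ω => if ω ∈ {ω' | k ∈ Γ (X ω')} then p k (X ω) else 0) μ :=
      hint_p k _ (hmΓ k)
    have hc : Integrable (fun ω => g * (if ω ∈ {ω' | k ∈ Γstar (X ω')} then (1:ℝ) else 0)) μ :=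
      (hint_1 _ (hmΓs k)).const_mul g
    have hd : Integrable (fun ω => g * (if ω ∈ {ω' | k ∈ Γ (X ω')} then (1:ℝ) else 0)) μ :=
      (hint_1 _ (hmΓ k)).const_mul g
    have hab : Integrable (fun ω => (if ω ∈ {ω' | k ∈ Γstar (X ω')} then p k (X ω) else 0)
        - (if ω ∈ {ω' | k ∈ Γ (X ω')} then p k (X ω) else 0)) μ := ha.sub hb
    have habc : Integrable (fun ω => (if ω ∈ {ω' | k ∈ Γstar (X ω')} then p k (X ω) else 0)
        - (if ω ∈ {ω' | k ∈ Γ (X ω')} then p k (X ω) else 0)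
        - g * (if ω ∈ {ω' | k ∈ Γstar (X ω')} then (1:ℝ) else 0)) μ := hab.sub hc
    rw [hfun, integral_add habc hd, integral_sub hab hc, integral_sub ha hb,
      integral_const_mul, integral_const_mul]
  -- integrability for the sum swap on RHS
  have hint_prod : ∀ k : Fin K, Integrable (fun ω =>
      ((if ω ∈ {ω' | k ∈ Γstar (X ω')} then (1:ℝ) else 0)
          - (if ω ∈ {ω' | k ∈ Γ (X ω')} then (1:ℝ) else 0)) * (p k (X ω) - g)) μ := by
    intro k
    refine integrable_of_bdd' (C := 1 * (1 + |g|)) ?_ ?_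
    · exact (Measurable.sub (Measurable.ite (hmΓs k) measurable_const measurable_const)
        (Measurable.ite (hmΓ k) measurable_const measurable_const)).mul
        ((hpm k).sub measurable_const)
    · intro ω
      rw [abs_mul]
      have h1 : |(if ω ∈ {ω' | k ∈ Γstar (X ω')} then (1:ℝ) else 0)
          - (if ω ∈ {ω' | k ∈ Γ (X ω')} then (1:ℝ) else 0)| ≤ 1 := by
        by_cases h : ω ∈ {ω' | k ∈ Γstar (X ω')} <;>
          by_cases h2 : ω ∈ {ω' | k ∈ Γ (X ω')} <;> simp [h, h2]
      have h2 : |p k (X ω) - g| ≤ 1 + |g| := by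
        calc |p k (X ω) - g| ≤ |p k (X ω)| + |g| := abs_sub _ _
          _ ≤ 1 + |g| := by
            have := abs_le.2 ⟨by linarith [(hp01 k (X ω)).1], (hp01 k (X ω)).2⟩
            linarith
      exact mul_le_mul h1 h2 (abs_nonneg _) zero_le_one
  -- final computation
  have hRHS : ∫ ω, ∑ k, (symmDiff (Γstar (X ω)) (Γ (X ω))).indicator
        (fun k => |p k (X ω) - g|) k ∂μ
      = ∑ k, (ISp k - IΓp k - g * IS1 k + g * IΓ1 k) := by
    have heq : (fun ω => ∑ k, (symmDiff (Γstar (X ω)) (Γ (X ω))).indicator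
          (fun k => |p k (X ω) - g|) k)
        = fun ω => ∑ k, ((if ω ∈ {ω' | k ∈ Γstar (X ω')} then (1:ℝ) else 0)
            - (if ω ∈ {ω' | k ∈ Γ (X ω')} then (1:ℝ) else 0)) * (p k (X ω) - g) := by
      funext ω; exact hpt ω
    rw [heq, integral_finset_sum _ (fun k _ => hint_prod k)]
    exact Finset.sum_congr rfl fun k _ => hexp k
  rw [hPnotΓ, hPnotS, hRHS]
  have hsum : ∑ k, (ISp k - IΓp k - g * IS1 k + g * IΓ1 k)
      = ∑ k, ISp k - ∑ k, IΓp k - g * ∑ k, IS1 k + g * ∑ k, IΓ1 k := by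
    rw [Finset.sum_add_distrib, Finset.sum_sub_distrib, Finset.sum_sub_distrib,
      ← Finset.mul_sum, ← Finset.mul_sum]
  rw [hsum, hIS1β, hIΓ1β]
  ring
end

section
/- Let Ĝ(t) = (1/N)∑_{i=1}^N ∑_{k=1}^K 1{f̂_k(X_i) ≥ t} be the empirical estimator of G̃(t) = ∑_k P(f̂_k(X) > t) based on N i.i.d. unlabeled samples, and assume each F_{f̂_k} is continuous. Then there exists an absolute constant C' > 0 such that ∑_{k=1}^K P(|Ĝ(f̂_k(X)) − G̃(f̂_k(X))| ≥ |G̃(f̂_k(X)) − β|) ≤ C'·K/√N. -/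
open MeasureTheory ProbabilityTheory Filter Topology
open scoped ENNReal

lemma aux_no_atom {Ω : Type} [MeasurableSpace Ω] (μ : Measure Ω) [IsProbabilityMeasure μ]
    (V : Ω → ℝ) (hV : Measurable V)
    (hc : Continuous fun t : ℝ => (μ {ω | V ω ≤ t}).toReal) (t : ℝ) :
    μ {ω | V ω = t} = 0 := by
  set s : ℕ → Set Ω := fun n => {ω | V ω ≤ t - 1/(n+1)} with hs
  have hmono : Monotone s := by
    intro m n hmn ω hω
    simp only [hs, Set.mem_setOf_eq] at *
    have : (1:ℝ)/(n+1) ≤ 1/(m+1) := by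
      apply div_le_div_of_nonneg_left (by norm_num) (by positivity)
      linarith [(Nat.cast_le (α := ℝ)).2 hmn]
    linarith
  have hU : (⋃ n, s n) = {ω | V ω < t} := by
    ext ω
    simp only [Set.mem_iUnion, hs, Set.mem_setOf_eq]
    constructor
    · rintro ⟨n, hn⟩
      have : (0:ℝ) < 1/(n+1) := by positivity
      linarith
    · intro h
      obtain ⟨n, hn⟩ := exists_nat_one_div_lt (show (0:ℝ) < t - V ω by linarith)
      exact ⟨n, by linarith⟩
  have h1 : Tendsto (fun n => μ (s n)) atTop (𝓝 (μ {ω | V ω < t})) := by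
    rw [← hU]; exact tendsto_measure_iUnion_atTop hmono
  have h1' : Tendsto (fun n => (μ (s n)).toReal) atTop (𝓝 ((μ {ω | V ω < t}).toReal)) :=
    (ENNReal.tendsto_toReal (measure_ne_top _ _)).comp h1
  have h2 : Tendsto (fun n : ℕ => (μ (s n)).toReal) atTop (𝓝 ((μ {ω | V ω ≤ t}).toReal)) := by
    have ht : Tendsto (fun n : ℕ => t - 1/(n+1)) atTop (𝓝 t) := by
      have : Tendsto (fun n : ℕ => (1:ℝ)/(n+1)) atTop (𝓝 0) :=
        tendsto_one_div_add_atTop_nhds_zero_nat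
      simpa using tendsto_const_nhds.sub this
    exact (hc.continuousAt.tendsto).comp ht
  have heq : (μ {ω | V ω < t}).toReal = (μ {ω | V ω ≤ t}).toReal :=
    tendsto_nhds_unique h1' h2
  have heq' : μ {ω | V ω < t} = μ {ω | V ω ≤ t} :=
    (ENNReal.toReal_eq_toReal_iff' (measure_ne_top _ _) (measure_ne_top _ _)).1 heq
  have hsub : {ω | V ω = t} ⊆ {ω | V ω ≤ t} \ {ω | V ω < t} := by
    intro ω hω
    simp only [Set.mem_setOf_eq, Set.mem_diff] at *
    constructor <;> simp [hω]
  refine le_antisymm ?_ zero_le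
  calc μ {ω | V ω = t} ≤ μ ({ω | V ω ≤ t} \ {ω | V ω < t}) := measure_mono hsub
    _ = μ {ω | V ω ≤ t} - μ {ω | V ω < t} :=
        measure_diff (Set.setOf_subset_setOf.2 fun ω => le_of_lt) (hV measurableSet_Iio).nullMeasurableSet
          (measure_ne_top _ _)
    _ = 0 := by rw [heq', tsub_self]

lemma aux_tendsto_top {Ω : Type} [MeasurableSpace Ω] (μ : Measure Ω) [IsProbabilityMeasure μ]
    (V : Ω → ℝ) (hV : Measurable V) :
    Tendsto (fun n : ℕ => (μ {ω | (n:ℝ) < V ω}).toReal) atTop (𝓝 0) := by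
  have h : Tendsto (fun n : ℕ => μ {ω | (n:ℝ) < V ω}) atTop (𝓝 (μ (⋂ n : ℕ, {ω | (n:ℝ) < V ω}))) := by
    apply tendsto_measure_iInter_atTop
    · exact fun n => (hV measurableSet_Ioi).nullMeasurableSet
    · intro m n hmn ω hω
      simp only [Set.mem_setOf_eq] at *
      exact lt_of_le_of_lt (by exact_mod_cast Nat.cast_le.2 hmn) hω
    · exact ⟨0, measure_ne_top _ _⟩
  have hempty : (⋂ n : ℕ, {ω | (n:ℝ) < V ω}) = ∅ := by
    ext ω
    simp only [Set.mem_iInter, Set.mem_setOf_eq, Set.mem_empty_iff_false, iff_false, not_forall,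
      not_lt]
    obtain ⟨n, hn⟩ := exists_nat_ge (V ω)
    exact ⟨n, hn⟩
  rw [hempty] at h
  simpa [Function.comp_def] using (ENNReal.tendsto_toReal (by simp)).comp h

lemma aux_tendsto_bot {Ω : Type} [MeasurableSpace Ω] (μ : Measure Ω) [IsProbabilityMeasure μ]
    (V : Ω → ℝ) (hV : Measurable V) :
    Tendsto (fun n : ℕ => (μ {ω | -(n:ℝ) < V ω}).toReal) atTop (𝓝 1) := by
  have h : Tendsto (fun n : ℕ => μ {ω | -(n:ℝ) < V ω}) atTop
      (𝓝 (μ (⋃ n : ℕ, {ω | -(n:ℝ) < V ω}))) := by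
    apply tendsto_measure_iUnion_atTop
    intro m n hmn ω hω
    simp only [Set.mem_setOf_eq] at *
    have : -(n:ℝ) ≤ -(m:ℝ) := by exact_mod_cast neg_le_neg (Nat.cast_le.2 hmn)
    linarith
  have huniv : (⋃ n : ℕ, {ω | -(n:ℝ) < V ω}) = Set.univ := by
    ext ω
    simp only [Set.mem_iUnion, Set.mem_setOf_eq, Set.mem_univ, iff_true]
    obtain ⟨n, hn⟩ := exists_nat_ge (-V ω)
    exact ⟨n + 1, by push_cast; linarith⟩
  rw [huniv, measure_univ] at h
  simpa [Function.comp_def] using (ENNReal.tendsto_toReal (by simp)).comp h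

lemma aux_anticonc {Ω 𝒳 : Type} [MeasurableSpace Ω] [MeasurableSpace 𝒳]
    (μ : Measure Ω) [IsProbabilityMeasure μ] (K : ℕ)
    (f : Fin K → 𝒳 → ℝ) (hf : ∀ k, Measurable (f k)) (X : Ω → 𝒳) (hX : Measurable X)
    (G : ℝ → ℝ) (hG : ∀ t, G t = ∑ k, (μ {ω | t < f k (X ω)}).toReal)
    (hGc : Continuous G)
    (hatom : ∀ (k : Fin K) (t : ℝ), μ {ω | f k (X ω) = t} = 0)
    (b s : ℝ) (hs : 0 ≤ s) :
    ∑ k, (μ {ω | |G (f k (X ω)) - b| ≤ s}).toReal ≤ 2 * s := by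
  have hmV : ∀ k : Fin K, Measurable (fun ω => f k (X ω)) := fun k => (hf k).comp hX
  have hmono : Antitone G := by
    intro t t' htt'
    rw [hG, hG]
    apply Finset.sum_le_sum
    intro k _
    apply ENNReal.toReal_mono (measure_ne_top _ _)
    apply measure_mono
    intro ω hω
    exact lt_of_le_of_lt htt' hω
  have hGnonneg : ∀ t, 0 ≤ G t := by
    intro t; rw [hG]; positivity
  have hGleK : ∀ t, G t ≤ K := by
    intro t; rw [hG]
    calc ∑ k : Fin K, (μ {ω | t < f k (X ω)}).toReal ≤ ∑ _k : Fin K, (1:ℝ) := by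
          apply Finset.sum_le_sum
          intro k _
          exact ENNReal.toReal_le_of_le_ofReal zero_le_one (by simpa using prob_le_one)
      _ = K := by simp
  have htop : Tendsto (fun n : ℕ => G n) atTop (𝓝 0) := by
    have : Tendsto (fun n : ℕ => ∑ k : Fin K, (μ {ω | (n:ℝ) < f k (X ω)}).toReal) atTop
        (𝓝 (∑ _k : Fin K, (0:ℝ))) :=
      tendsto_finset_sum _ fun k _ => aux_tendsto_top μ _ (hmV k)
    simpa [hG] using this
  have hbot : Tendsto (fun n : ℕ => G (-(n:ℝ))) atTop (𝓝 K) := by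
    have : Tendsto (fun n : ℕ => ∑ k : Fin K, (μ {ω | -(n:ℝ) < f k (X ω)}).toReal) atTop
        (𝓝 (∑ _k : Fin K, (1:ℝ))) :=
      tendsto_finset_sum _ fun k _ => aux_tendsto_bot μ _ (hmV k)
    simpa [hG] using this
  -- B1
  have B1 : ∀ d : ℝ, 0 ≤ d → ∑ k, (μ {ω | G (f k (X ω)) ≤ d}).toReal ≤ d := by
    intro d hd
    set T : Set ℝ := {t | G t ≤ d} with hT
    by_cases hTne : T.Nonempty
    · by_cases hTb : BddBelow T
      · have hclosed : IsClosed T := IsClosed.preimage hGc isClosed_Iic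
        have hb0 : sInf T ∈ T := hclosed.csInf_mem hTne hTb
        set b0 := sInf T
        have hsub : ∀ k : Fin K,
            {ω | G (f k (X ω)) ≤ d} ⊆ {ω | b0 < f k (X ω)} ∪ {ω | f k (X ω) = b0} := by
          intro k ω hω
          have : b0 ≤ f k (X ω) := csInf_le hTb hω
          rcases lt_or_eq_of_le this with h | h
          · exact Or.inl h
          · exact Or.inr h.symm
        calc ∑ k, (μ {ω | G (f k (X ω)) ≤ d}).toReal
            ≤ ∑ k, (μ {ω | b0 < f k (X ω)}).toReal := by
              apply Finset.sum_le_sum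
              intro k _
              apply ENNReal.toReal_mono (measure_ne_top _ _)
              calc μ {ω | G (f k (X ω)) ≤ d}
                  ≤ μ ({ω | b0 < f k (X ω)} ∪ {ω | f k (X ω) = b0}) := measure_mono (hsub k)
                _ ≤ μ {ω | b0 < f k (X ω)} + μ {ω | f k (X ω) = b0} := measure_union_le _ _
                _ = μ {ω | b0 < f k (X ω)} := by rw [hatom k b0, add_zero]
          _ = G b0 := (hG b0).symm
          _ ≤ d := hb0
      · have hall : ∀ r : ℝ, G r ≤ d := by
          intro r
          obtain ⟨t, htT, htr⟩ := not_bddBelow_iff.1 hTb r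
          exact le_trans (hmono htr.le) htT
        have hKd : (K:ℝ) ≤ d := le_of_tendsto' hbot fun n => hall _
        calc ∑ k, (μ {ω | G (f k (X ω)) ≤ d}).toReal ≤ ∑ _k : Fin K, (1:ℝ) := by
              apply Finset.sum_le_sum
              intro k _
              exact ENNReal.toReal_le_of_le_ofReal zero_le_one (by simpa using prob_le_one)
          _ = K := by simp
          _ ≤ d := hKd
    · have hempty : ∀ k : Fin K, {ω | G (f k (X ω)) ≤ d} = ∅ := by
        intro k
        ext ω
        simp only [Set.mem_setOf_eq, Set.mem_empty_iff_false, iff_false]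
        intro h
        exact hTne ⟨f k (X ω), h⟩
      simp [hempty, hd]
  -- B2
  have B2 : ∀ c : ℝ, c ≤ K → c ≤ ∑ k, (μ {ω | G (f k (X ω)) < c}).toReal := by
    intro c hcK
    set T : Set ℝ := {t | G t < c} with hT
    by_cases hTne : T.Nonempty
    · by_cases hTb : BddBelow T
      · set a := sInf T
        have hsub : ∀ k : Fin K, {ω | a < f k (X ω)} ⊆ {ω | G (f k (X ω)) < c} := by
          intro k ω hω
          obtain ⟨t, htT, htv⟩ := exists_lt_of_csInf_lt hTne hω
          exact lt_of_le_of_lt (hmono htv.le) htT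
        have hcGa : c ≤ G a := by
          by_contra h
          push_neg at h
          have h1 : ∀ᶠ t in 𝓝[<] a, G t < c :=
            ((hGc.continuousAt.eventually_lt_const h).filter_mono nhdsWithin_le_nhds)
          have h2 : ∀ᶠ t in 𝓝[<] a, t < a := eventually_mem_nhdsWithin
          obtain ⟨t, htG, hta⟩ := (h1.and h2).exists
          exact absurd (csInf_le hTb htG) (not_le.2 hta)
        calc c ≤ G a := hcGa
          _ = ∑ k, (μ {ω | a < f k (X ω)}).toReal := hG a
          _ ≤ ∑ k, (μ {ω | G (f k (X ω)) < c}).toReal := by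
              apply Finset.sum_le_sum
              intro k _
              exact ENNReal.toReal_mono (measure_ne_top _ _) (measure_mono (hsub k))
      · have hall : ∀ k : Fin K, {ω | G (f k (X ω)) < c} = Set.univ := by
          intro k
          ext ω
          simp only [Set.mem_setOf_eq, Set.mem_univ, iff_true]
          obtain ⟨t, htT, htv⟩ := not_bddBelow_iff.1 hTb (f k (X ω))
          exact lt_of_le_of_lt (hmono htv.le) htT
        calc c ≤ (K:ℝ) := hcK
          _ = ∑ k : Fin K, (μ {ω | G (f k (X ω)) < c}).toReal := by
              simp [hall]
    · have hc0 : c ≤ 0 := by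
        apply ge_of_tendsto' htop
        intro n
        by_contra h
        push_neg at h
        exact hTne ⟨n, h⟩
      calc c ≤ 0 := hc0
        _ ≤ _ := Finset.sum_nonneg fun k _ => ENNReal.toReal_nonneg
  -- main case split
  by_cases hd : b + s < 0
  · have hempty : ∀ k : Fin K, {ω | |G (f k (X ω)) - b| ≤ s} = ∅ := by
      intro k
      ext ω
      simp only [Set.mem_setOf_eq, Set.mem_empty_iff_false, iff_false]
      intro h
      have h1 := abs_le.1 h
      have h2 := hGnonneg (f k (X ω))
      linarith [h1.2]
    simp only [hempty]
    simp
    linarith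
  by_cases hcK : (K:ℝ) < b - s
  · have hempty : ∀ k : Fin K, {ω | |G (f k (X ω)) - b| ≤ s} = ∅ := by
      intro k
      ext ω
      simp only [Set.mem_setOf_eq, Set.mem_empty_iff_false, iff_false]
      intro h
      have h1 := abs_le.1 h
      have h2 := hGleK (f k (X ω))
      linarith [h1.1]
    simp only [hempty]
    simp
    linarith
  push_neg at hd hcK
  have hstep : ∀ k : Fin K, (μ {ω | |G (f k (X ω)) - b| ≤ s}).toReal
      ≤ (μ {ω | G (f k (X ω)) ≤ b + s}).toReal - (μ {ω | G (f k (X ω)) < b - s}).toReal := by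
    intro k
    have hdisj : Disjoint {ω | |G (f k (X ω)) - b| ≤ s} {ω | G (f k (X ω)) < b - s} := by
      rw [Set.disjoint_left]
      intro ω h1 h2
      simp only [Set.mem_setOf_eq] at h1 h2
      have := abs_le.1 h1
      linarith [this.1]
    have hsub : {ω | |G (f k (X ω)) - b| ≤ s} ∪ {ω | G (f k (X ω)) < b - s}
        ⊆ {ω | G (f k (X ω)) ≤ b + s} := by
      rintro ω (h | h) <;> simp only [Set.mem_setOf_eq] at *
      · have := abs_le.1 h; linarith [this.2]
      · linarith
    have hmeas : MeasurableSet {ω | G (f k (X ω)) < b - s} :=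
      (hGc.measurable.comp (hmV k)) measurableSet_Iio
    have hun : μ {ω | |G (f k (X ω)) - b| ≤ s} + μ {ω | G (f k (X ω)) < b - s}
        ≤ μ {ω | G (f k (X ω)) ≤ b + s} := by
      rw [← measure_union hdisj hmeas]
      exact measure_mono hsub
    have := ENNReal.toReal_mono (measure_ne_top _ _) hun
    rw [ENNReal.toReal_add (measure_ne_top _ _) (measure_ne_top _ _)] at this
    linarith
  calc ∑ k, (μ {ω | |G (f k (X ω)) - b| ≤ s}).toReal
      ≤ ∑ k, ((μ {ω | G (f k (X ω)) ≤ b + s}).toReal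
          - (μ {ω | G (f k (X ω)) < b - s}).toReal) :=
        Finset.sum_le_sum fun k _ => hstep k
    _ = (∑ k, (μ {ω | G (f k (X ω)) ≤ b + s}).toReal)
          - ∑ k, (μ {ω | G (f k (X ω)) < b - s}).toReal := Finset.sum_sub_distrib _ _
    _ ≤ (b + s) - (b - s) := by
        have := B1 (b + s) hd
        have := B2 (b - s) hcK
        linarith
    _ = 2 * s := by ring

lemma aux_cheb {Ω 𝒳 : Type} [MeasurableSpace Ω] [MeasurableSpace 𝒳]
    (μ : Measure Ω) [IsProbabilityMeasure μ] (K N : ℕ) (hN : 0 < N)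
    (f : Fin K → 𝒳 → ℝ) (hf : ∀ k, Measurable (f k))
    (X : Ω → 𝒳) (Xi : Fin N → Ω → 𝒳) (hX : Measurable X) (hXi : ∀ i, Measurable (Xi i))
    (hlaw : ∀ i, Measure.map (Xi i) μ = Measure.map X μ)
    (hindep : iIndepFun (Sum.elim Xi fun _ : Unit => X) μ)
    (hatom : ∀ (k : Fin K) (t : ℝ), μ {ω | f k (X ω) = t} = 0)
    (Gt : ℝ → ℝ) (hGt : ∀ t, Gt t = ∑ k, (μ {ω | t < f k (X ω)}).toReal)
    (Gh : Ω → ℝ → ℝ)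
    (hGh : ∀ ω t, Gh ω t = (1 / (N : ℝ)) * ∑ i, ∑ k, (if t ≤ f k (Xi i ω) then (1:ℝ) else 0))
    (t s : ℝ) (hs : 0 < s) :
    μ {ω | s ≤ |Gh ω t - Gt t|} ≤ ENNReal.ofReal ((K:ℝ)^2 / (4 * N * s^2)) := by
  classical
  set g : 𝒳 → ℝ := fun v => ∑ l, if t ≤ f l v then (1:ℝ) else 0 with hgdef
  have hg : Measurable g := by
    apply Finset.measurable_sum
    intro l _
    exact Measurable.ite ((hf l) measurableSet_Ici) measurable_const measurable_const
  set Z : Fin N → Ω → ℝ := fun i ω => g (Xi i ω) with hZdef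
  have hZmeas : ∀ i, Measurable (Z i) := fun i => hg.comp (hXi i)
  have hZbound : ∀ i ω, Z i ω ∈ Set.Icc (0:ℝ) K := by
    intro i ω
    constructor
    · apply Finset.sum_nonneg; intro l _; positivity
    · calc (∑ l, if t ≤ f l (Xi i ω) then (1:ℝ) else 0) ≤ ∑ _l : Fin K, (1:ℝ) := by
            apply Finset.sum_le_sum; intro l _; split <;> norm_num
        _ = K := by simp
  have hZL2 : ∀ i, MemLp (Z i) 2 μ := fun i =>
    memLp_of_bounded (ae_of_all _ (hZbound i)) (hZmeas i).aestronglyMeasurable 2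
  -- pairwise independence
  have hWindep : iIndepFun
      (fun j => g ∘ (Sum.elim Xi (fun _ => X) j)) μ :=
    hindep.comp (fun _ => g) (fun _ => hg)
  have hpair : ∀ i j : Fin N, i ≠ j → IndepFun (Z i) (Z j) μ := by
    intro i j hij
    have := hWindep.indepFun (i := Sum.inl i) (j := Sum.inl j) (by simpa using hij)
    exact this
  -- mean of Z i
  have hZmean : ∀ i, μ[Z i] = Gt t := by
    intro i
    have hint : ∀ l : Fin K, Integrable (fun ω => if t ≤ f l (Xi i ω) then (1:ℝ) else 0) μ := by
      intro l
      have : (fun ω => if t ≤ f l (Xi i ω) then (1:ℝ) else 0)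
          = Set.indicator {ω | t ≤ f l (Xi i ω)} (fun _ => (1:ℝ)) := by
        ext ω; simp [Set.indicator_apply]
      rw [this]
      exact (integrable_const (1:ℝ)).indicator ((hXi i) ((hf l) measurableSet_Ici))
    have h1 : μ[Z i] = ∑ l, ∫ ω, (if t ≤ f l (Xi i ω) then (1:ℝ) else 0) ∂μ := by
      simp only [hZdef, hgdef]
      exact integral_finset_sum _ fun l _ => hint l
    have h2 : ∀ l : Fin K, ∫ ω, (if t ≤ f l (Xi i ω) then (1:ℝ) else 0) ∂μ
        = (μ {ω | t ≤ f l (Xi i ω)}).toReal := by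
      intro l
      have : (fun ω => if t ≤ f l (Xi i ω) then (1:ℝ) else 0)
          = Set.indicator {ω | t ≤ f l (Xi i ω)} (fun _ => (1:ℝ)) := by
        ext ω; simp [Set.indicator_apply]
      have hmsO : MeasurableSet {ω : Ω | t ≤ f l (Xi i ω)} :=
        measurableSet_le measurable_const
          (show Measurable fun ω => f l (Xi i ω) from (hf l).comp (hXi i))
      rw [this]
      exact (integral_indicator_const (1:ℝ) hmsO).trans (by simp [Measure.real])
    have h3 : ∀ l : Fin K, μ {ω | t ≤ f l (Xi i ω)} = μ {ω | t < f l (X ω)} := by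
      intro l
      have hms : MeasurableSet {v : 𝒳 | t ≤ f l v} := measurableSet_le measurable_const (hf l)
      have e1 : μ {ω | t ≤ f l (Xi i ω)} = (μ.map (Xi i)) {v | t ≤ f l v} := by
        rw [Measure.map_apply (hXi i) hms]
        rfl
      have e2 : μ {ω | t ≤ f l (X ω)} = (μ.map X) {v | t ≤ f l v} := by
        rw [Measure.map_apply hX hms]
        rfl
      have e3 : μ {ω | t ≤ f l (X ω)} = μ {ω | t < f l (X ω)} := by
        apply le_antisymm
        · calc μ {ω | t ≤ f l (X ω)}
              ≤ μ ({ω | t < f l (X ω)} ∪ {ω | f l (X ω) = t}) := by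
                apply measure_mono
                intro ω hω
                rcases lt_or_eq_of_le (show t ≤ f l (X ω) from hω) with h | h
                · exact Or.inl h
                · exact Or.inr h.symm
            _ ≤ μ {ω | t < f l (X ω)} + μ {ω | f l (X ω) = t} := measure_union_le _ _
            _ = μ {ω | t < f l (X ω)} := by rw [hatom l t, add_zero]
        · exact measure_mono fun ω hω => show t ≤ f l (X ω) from le_of_lt hω
      rw [e1, hlaw i, ← e2, e3]
    rw [h1]
    rw [hGt]
    apply Finset.sum_congr rfl
    intro l _
    rw [h2 l, h3 l]
  -- variance bound
  have hvar_each : ∀ i, variance (Z i) μ ≤ (K:ℝ)^2 / 4 := by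
    intro i
    have := variance_le_sq_of_bounded (μ := μ) (a := 0) (b := K)
      (ae_of_all _ (hZbound i)) (hZmeas i).aemeasurable
    calc variance (Z i) μ ≤ (((K:ℝ) - 0) / 2)^2 := this
      _ = (K:ℝ)^2 / 4 := by ring
  have hSL2 : MemLp (∑ i, Z i) 2 μ := memLp_finsetSum' _ fun i _ => hZL2 i
  have hvar_sum : variance (∑ i, Z i) μ = ∑ i, variance (Z i) μ :=
    IndepFun.variance_sum (fun i _ => hZL2 i) fun i _ j _ hij => hpair i j hij
  have hGh_eq : (fun ω => Gh ω t) = fun ω => (1/(N:ℝ)) * (∑ i, Z i) ω := by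
    funext ω
    rw [hGh]
    simp only [Finset.sum_apply, hZdef, hgdef]
  have hGhL2 : MemLp (fun ω => Gh ω t) 2 μ := by
    rw [hGh_eq]
    exact hSL2.const_mul _
  have hvarGh : variance (fun ω => Gh ω t) μ ≤ (K:ℝ)^2 / (4 * N) := by
    rw [hGh_eq, variance_const_mul]
    calc (1/(N:ℝ))^2 * variance (∑ i, Z i) μ = (1/(N:ℝ))^2 * ∑ i, variance (Z i) μ := by
          rw [hvar_sum]
      _ ≤ (1/(N:ℝ))^2 * ∑ _i : Fin N, ((K:ℝ)^2/4) := by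
          apply mul_le_mul_of_nonneg_left _ (by positivity)
          exact Finset.sum_le_sum fun i _ => hvar_each i
      _ = (1/(N:ℝ))^2 * (N * ((K:ℝ)^2/4)) := by simp [Finset.sum_const]
      _ = (K:ℝ)^2 / (4 * N) := by
          have hN' : (N:ℝ) ≠ 0 := Nat.cast_ne_zero.2 hN.ne'
          field_simp
  have hmeanGh : μ[fun ω => Gh ω t] = Gt t := by
    rw [hGh_eq]
    rw [integral_const_mul]
    simp only [Finset.sum_apply]
    have : ∫ ω, ∑ i, Z i ω ∂μ = ∑ i, μ[Z i] :=
      integral_finset_sum _ fun i _ => (hZL2 i).integrable one_le_two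
    rw [this]
    have : ∑ i : Fin N, μ[Z i] = N * Gt t := by
      rw [Finset.sum_congr rfl fun i _ => hZmean i]
      simp [Finset.sum_const, mul_comm]
    rw [this]
    have hN' : (N:ℝ) ≠ 0 := Nat.cast_ne_zero.2 hN.ne'
    field_simp
  have hcheb := meas_ge_le_variance_div_sq (μ := μ) hGhL2 hs
  rw [hmeanGh] at hcheb
  refine le_trans hcheb (ENNReal.ofReal_le_ofReal ?_)
  rw [div_le_div_iff₀ (by positivity) (by positivity)]
  calc variance (fun ω => Gh ω t) μ * (4 * N * s^2)
      ≤ ((K:ℝ)^2 / (4 * N)) * (4 * N * s^2) := by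
        apply mul_le_mul_of_nonneg_right hvarGh (by positivity)
    _ = (K:ℝ)^2 * s^2 := by
        have hN' : (N:ℝ) ≠ 0 := Nat.cast_ne_zero.2 hN.ne'
        field_simp

lemma aux_split {Ω 𝒳 : Type} [MeasurableSpace Ω] [MeasurableSpace 𝒳]
    (μ : Measure Ω) [IsProbabilityMeasure μ] (K N : ℕ)
    (f : Fin K → 𝒳 → ℝ) (hf : ∀ k, Measurable (f k))
    (X : Ω → 𝒳) (Xi : Fin N → Ω → 𝒳) (hX : Measurable X) (hXi : ∀ i, Measurable (Xi i))
    (hindep : iIndepFun (Sum.elim Xi fun _ : Unit => X) μ)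
    (Gt : ℝ → ℝ) (hGtm : Measurable Gt)
    (Gh : Ω → ℝ → ℝ)
    (hGh : ∀ ω t, Gh ω t = (1 / (N : ℝ)) * ∑ i, ∑ l, (if t ≤ f l (Xi i ω) then (1:ℝ) else 0))
    (k : Fin K) (A : Set ℝ) (hA : MeasurableSet A) (s : ℝ) (c : ℝ≥0∞)
    (hc : ∀ t : ℝ, μ {ω | s ≤ |Gh ω t - Gt t|} ≤ c) :
    μ {ω | f k (X ω) ∈ A ∧ s ≤ |Gh ω (f k (X ω)) - Gt (f k (X ω))|}
      ≤ c * μ {ω | f k (X ω) ∈ A} := by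
  classical
  set Y : Ω → (Fin N → 𝒳) := fun ω i => Xi i ω with hYdef
  have hY : Measurable Y := measurable_pi_lambda _ hXi
  set Gf : (Fin N → 𝒳) → ℝ → ℝ :=
    fun y t => (1 / (N : ℝ)) * ∑ i, ∑ l, (if t ≤ f l (y i) then (1:ℝ) else 0) with hGfdef
  have hGhY : ∀ ω t, Gh ω t = Gf (Y ω) t := fun ω t => hGh ω t
  have hGfm : ∀ t0 : ℝ, Measurable fun y => Gf y t0 := by
    intro t0
    apply Measurable.const_mul
    apply Finset.measurable_sum
    intro i _
    apply Finset.measurable_sum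
    intro l _
    exact Measurable.ite
      (measurableSet_le measurable_const ((hf l).comp (measurable_pi_apply i)))
      measurable_const measurable_const
  have hGfm2 : Measurable fun p : 𝒳 × (Fin N → 𝒳) => Gf p.2 (f k p.1) := by
    apply Measurable.const_mul
    apply Finset.measurable_sum
    intro i _
    apply Finset.measurable_sum
    intro l _
    exact Measurable.ite
      (measurableSet_le ((hf k).comp measurable_fst)
        ((hf l).comp ((measurable_pi_apply i).comp measurable_snd)))
      measurable_const measurable_const
  -- independence of X and Y
  have hmeasAll : ∀ j : Sum (Fin N) Unit, Measurable (Sum.elim Xi (fun _ => X) j) := by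
    rintro (i | u)
    · exact hXi i
    · exact hX
  have hST : Disjoint ({Sum.inr ()} : Finset (Sum (Fin N) Unit)) (Finset.univ.image Sum.inl) := by
    simp [Finset.disjoint_left]
  set T : Finset (Sum (Fin N) Unit) := Finset.univ.image Sum.inl with hTdef
  have h0 := hindep.indepFun_finset {Sum.inr ()} T hST hmeasAll
  have hXY : IndepFun X Y μ := by
    have h1 := h0.comp (_mγ := inferInstance) (_mγ' := inferInstance)
      (φ := fun p : (({Sum.inr ()} : Finset (Sum (Fin N) Unit)) → 𝒳) => p ⟨Sum.inr (), by simp⟩)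
      (ψ := fun (p : (T → 𝒳)) (i : Fin N) => p ⟨Sum.inl i, by simp [hTdef]⟩)
      (by exact measurable_pi_apply _)
      (by exact measurable_pi_lambda _ fun i => measurable_pi_apply _)
    exact h1
  have hmapXY : μ.map (fun ω => (X ω, Y ω)) = (μ.map X).prod (μ.map Y) :=
    (indepFun_iff_map_prod_eq_prod_map_map hX.aemeasurable hY.aemeasurable).1 hXY
  set S : Set (𝒳 × (Fin N → 𝒳)) :=
    {p | f k p.1 ∈ A ∧ s ≤ |Gf p.2 (f k p.1) - Gt (f k p.1)|} with hSdef
  have hmS : MeasurableSet S := by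
    apply MeasurableSet.inter
    · exact ((hf k).comp measurable_fst) hA
    · exact measurableSet_le measurable_const
        ((hGfm2.sub (hGtm.comp ((hf k).comp measurable_fst))).abs)
  have hpre : {ω | f k (X ω) ∈ A ∧ s ≤ |Gh ω (f k (X ω)) - Gt (f k (X ω))|}
      = (fun ω => (X ω, Y ω)) ⁻¹' S := by
    ext ω
    simp only [Set.mem_setOf_eq, Set.mem_preimage, hSdef, hGhY]
  rw [hpre, ← Measure.map_apply (hX.prodMk hY) hmS, hmapXY, Measure.prod_apply hmS]
  have hbound : ∀ x : 𝒳, (μ.map Y) (Prod.mk x ⁻¹' S)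
      ≤ Set.indicator {x | f k x ∈ A} (fun _ => c) x := by
    intro x
    by_cases hxA : f k x ∈ A
    · have hind : Set.indicator {x | f k x ∈ A} (fun _ => c) x = c :=
        Set.indicator_of_mem (s := {x | f k x ∈ A}) (a := x) hxA _
      rw [hind]
      have hsub : Prod.mk x ⁻¹' S ⊆ {y | s ≤ |Gf y (f k x) - Gt (f k x)|} := by
        intro y hy
        exact hy.2
      have hmset : MeasurableSet {y | s ≤ |Gf y (f k x) - Gt (f k x)|} :=
        measurableSet_le measurable_const (((hGfm (f k x)).sub measurable_const).abs)
      calc (μ.map Y) (Prod.mk x ⁻¹' S) ≤ (μ.map Y) {y | s ≤ |Gf y (f k x) - Gt (f k x)|} :=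
            measure_mono hsub
        _ = μ {ω | s ≤ |Gf (Y ω) (f k x) - Gt (f k x)|} := by
            rw [Measure.map_apply hY hmset]
            rfl
        _ = μ {ω | s ≤ |Gh ω (f k x) - Gt (f k x)|} := by
            congr 1
            ext ω
            simp only [Set.mem_setOf_eq, hGhY]
        _ ≤ c := hc (f k x)
    · have : Prod.mk x ⁻¹' S = ∅ := by
        ext y
        simp only [Set.mem_preimage, hSdef, Set.mem_setOf_eq, Set.mem_empty_iff_false, iff_false]
        intro h
        exact hxA h.1
      have hind : Set.indicator {x | f k x ∈ A} (fun _ => c) x = 0 :=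
        Set.indicator_of_notMem (s := {x | f k x ∈ A}) (a := x) hxA _
      rw [this, hind]
      simp
  calc ∫⁻ x, (μ.map Y) (Prod.mk x ⁻¹' S) ∂(μ.map X)
      ≤ ∫⁻ x, Set.indicator {x | f k x ∈ A} (fun _ => c) x ∂(μ.map X) :=
        lintegral_mono hbound
    _ = c * (μ.map X) {x | f k x ∈ A} := by
        rw [lintegral_indicator]
        · simp [lintegral_const, Measure.restrict_apply]
        · exact (hf k) hA
    _ = c * μ {ω | f k (X ω) ∈ A} := by
        congr 1
        exact Measure.map_apply hX ((hf k) hA)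

/-- (Lemma 2 of the paper.) There is an absolute constant `C' > 0` such that,
for the empirical tail-sum `Ĝ` based on `N` i.i.d. unlabeled samples and its population
counterpart `G̃(t) = ∑_k P(f̂_k(X) > t)` (with continuous c.d.f.s),
`∑_k P(|Ĝ(f̂_k(X)) − G̃(f̂_k(X))| ≥ |G̃(f̂_k(X)) − β|) ≤ C'·K/√N`. -/
theorem empirical_tail_sum_deviation_bound :
    ∃ C' : ℝ, 0 < C' ∧
      ∀ (Ω 𝒳 : Type) [MeasurableSpace Ω] [MeasurableSpace 𝒳]
        (μ : Measure Ω) [IsProbabilityMeasure μ]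
        (K N : ℕ), 0 < K → 0 < N →
        ∀ (f : Fin K → 𝒳 → ℝ), (∀ k, Measurable (f k)) →
        ∀ (X : Ω → 𝒳) (Xi : Fin N → Ω → 𝒳), Measurable X → (∀ i, Measurable (Xi i)) →
        -- the samples are i.i.d. with the same law as X, and independent of X
        (∀ i, Measure.map (Xi i) μ = Measure.map X μ) →
        iIndepFun (Sum.elim Xi fun _ : Unit => X) μ →
        -- continuity of the c.d.f.s of the scores
        (∀ k, Continuous fun t : ℝ => (μ {ω | f k (X ω) ≤ t}).toReal) →
        ∀ (Gt : ℝ → ℝ), (∀ t, Gt t = ∑ k, (μ {ω | t < f k (X ω)}).toReal) →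
        ∀ (Gh : Ω → ℝ → ℝ),
          (∀ ω t, Gh ω t = (1 / (N : ℝ)) *
            ∑ i, ∑ k, (if t ≤ f k (Xi i ω) then (1:ℝ) else 0)) →
        ∀ β : ℝ,
        ∑ k, (μ {ω | |Gt (f k (X ω)) - β| ≤ |Gh ω (f k (X ω)) - Gt (f k (X ω))|}).toReal
          ≤ C' * K / Real.sqrt N := by
  classical
  refine ⟨16, by norm_num, ?_⟩
  intro Ω 𝒳 _ _ μ _ K N hK hN f hf X Xi hX hXi hlaw hindep hcdf Gt hGt Gh hGh β
  have hmV : ∀ k : Fin K, Measurable fun ω => f k (X ω) := fun k => (hf k).comp hX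
  have hatom : ∀ (k : Fin K) (t : ℝ), μ {ω | f k (X ω) = t} = 0 :=
    fun k t => aux_no_atom μ _ (hmV k) (hcdf k) t
  -- basic bounds on Gt and Gh
  have hGt_term : ∀ (k : Fin K) (t : ℝ),
      (μ {ω | t < f k (X ω)}).toReal = 1 - (μ {ω | f k (X ω) ≤ t}).toReal := by
    intro k t
    have hc : {ω | t < f k (X ω)} = {ω | f k (X ω) ≤ t}ᶜ := by
      ext ω; simp [not_le]
    rw [hc, measure_compl (measurableSet_le (hmV k) measurable_const) (measure_ne_top _ _),
      measure_univ, ENNReal.toReal_sub_of_le prob_le_one (by simp)]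
    simp
  have hGtc : Continuous Gt := by
    have : Gt = fun t => ∑ k : Fin K, (1 - (μ {ω | f k (X ω) ≤ t}).toReal) := by
      funext t
      rw [hGt]
      exact Finset.sum_congr rfl fun k _ => hGt_term k t
    rw [this]
    exact continuous_finset_sum _ fun k _ => (continuous_const.sub (hcdf k))
  have hGtm : Measurable Gt := hGtc.measurable
  have hGt0 : ∀ t, 0 ≤ Gt t := by
    intro t; rw [hGt]; positivity
  have hGtK : ∀ t, Gt t ≤ K := by
    intro t; rw [hGt]
    calc ∑ k : Fin K, (μ {ω | t < f k (X ω)}).toReal ≤ ∑ _k : Fin K, (1:ℝ) :=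
          Finset.sum_le_sum fun k _ =>
            ENNReal.toReal_le_of_le_ofReal zero_le_one (by simpa using prob_le_one)
      _ = K := by simp
  have hGh0 : ∀ ω t, 0 ≤ Gh ω t := by
    intro ω t
    rw [hGh]
    apply mul_nonneg (by positivity)
    apply Finset.sum_nonneg
    intro i _
    apply Finset.sum_nonneg
    intro l _
    split <;> norm_num
  have hGhK : ∀ ω t, Gh ω t ≤ K := by
    intro ω t
    rw [hGh]
    have h1 : ∀ i : Fin N, (∑ l : Fin K, if t ≤ f l (Xi i ω) then (1:ℝ) else 0) ≤ K := by
      intro i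
      calc (∑ l : Fin K, if t ≤ f l (Xi i ω) then (1:ℝ) else 0) ≤ ∑ _l : Fin K, (1:ℝ) := by
            apply Finset.sum_le_sum; intro l _; split <;> norm_num
        _ = K := by simp
    calc (1 / (N:ℝ)) * ∑ i, ∑ l, (if t ≤ f l (Xi i ω) then (1:ℝ) else 0)
        ≤ (1 / (N:ℝ)) * ∑ _i : Fin N, (K:ℝ) := by
          apply mul_le_mul_of_nonneg_left _ (by positivity)
          exact Finset.sum_le_sum fun i _ => h1 i
      _ = K := by
          simp only [Finset.sum_const, Finset.card_univ, Fintype.card_fin, nsmul_eq_mul]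
          have hN' : (N:ℝ) ≠ 0 := Nat.cast_ne_zero.2 hN.ne'
          field_simp
  -- the dyadic scale
  set γ : ℝ := K / Real.sqrt N with hγdef
  have hsN : (0:ℝ) < Real.sqrt N := Real.sqrt_pos.2 (by exact_mod_cast hN)
  have hγ : 0 < γ := div_pos (by exact_mod_cast hK) hsN
  have hK2 : (K:ℝ)^2 = N * γ^2 := by
    rw [hγdef, div_pow, Real.sq_sqrt (by positivity : (0:ℝ) ≤ (N:ℝ))]
    have hN' : (N:ℝ) ≠ 0 := Nat.cast_ne_zero.2 hN.ne'
    field_simp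
  have hs1 : (1:ℝ) ≤ Real.sqrt N := by
    rw [show (1:ℝ) = Real.sqrt 1 from Real.sqrt_one.symm]
    exact Real.sqrt_le_sqrt (by exact_mod_cast hN)
  have hsq : Real.sqrt N * Real.sqrt N = N := Real.mul_self_sqrt (by positivity)
  have hKle : (K:ℝ) ≤ 2^N * γ := by
    have h2 : (N:ℝ) ≤ 2^N := by exact_mod_cast N.lt_two_pow_self.le
    have h3 : Real.sqrt N ≤ 2^N := by nlinarith
    rw [hγdef, show (2:ℝ)^N * ((K:ℝ)/Real.sqrt N) = (2^N * K)/Real.sqrt N by ring,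
      le_div_iff₀ hsN]
    nlinarith [show (0:ℝ) ≤ (K:ℝ) by positivity]
  -- instantiated key estimates
  have hCheb : ∀ (t s : ℝ), 0 < s →
      μ {ω | s ≤ |Gh ω t - Gt t|} ≤ ENNReal.ofReal ((K:ℝ)^2/(4*N*s^2)) :=
    fun t s hs => aux_cheb μ K N hN f hf X Xi hX hXi hlaw hindep hatom Gt hGt Gh hGh t s hs
  have hAC : ∀ s : ℝ, 0 ≤ s →
      ∑ k, (μ {ω | |Gt (f k (X ω)) - β| ≤ s}).toReal ≤ 2 * s :=
    fun s hs => aux_anticonc μ K f hf X hX Gt hGt hGtc hatom β s hs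
  -- the events
  set E : Fin K → Set Ω :=
    fun k => {ω | |Gt (f k (X ω)) - β| ≤ |Gh ω (f k (X ω)) - Gt (f k (X ω))|} with hEdef
  set A : ℕ → Set ℝ := fun j => {t | |Gt t - β| ≤ 2^(j+1) * γ} with hAdef
  have hmA : ∀ j, MeasurableSet (A j) :=
    fun j => measurableSet_le ((hGtm.sub measurable_const).abs) measurable_const
  set D : Fin K → ℕ → Set Ω := fun k j =>
    {ω | f k (X ω) ∈ A j ∧ 2^j*γ ≤ |Gh ω (f k (X ω)) - Gt (f k (X ω))|} with hDdef
  set D0 : Fin K → Set Ω := fun k => {ω | |Gt (f k (X ω)) - β| ≤ γ} with hD0def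
  -- covering
  have hcover : ∀ k : Fin K, E k ⊆ D0 k ∪ ⋃ j ∈ Finset.range N, D k j := by
    intro k ω hω
    have hr : |Gt (f k (X ω)) - β| ≤ |Gh ω (f k (X ω)) - Gt (f k (X ω))| := hω
    set r := |Gt (f k (X ω)) - β| with hrdef
    set q := |Gh ω (f k (X ω)) - Gt (f k (X ω))| with hqdef
    have hqK : q ≤ K := by
      rw [hqdef, abs_le]
      constructor
      · have := hGh0 ω (f k (X ω)); have := hGtK (f k (X ω)); linarith
      · have := hGhK ω (f k (X ω)); have := hGt0 (f k (X ω)); linarith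
    by_cases hr0 : r ≤ γ
    · exact Or.inl hr0
    · push_neg at hr0
      right
      have hex : ∃ m : ℕ, r ≤ 2^m * γ := ⟨N, le_trans (le_trans hr hqK) hKle⟩
      set m := Nat.find hex with hmdef
      have hm_spec : r ≤ 2^m * γ := Nat.find_spec hex
      have hm0 : m ≠ 0 := by
        intro h
        rw [h] at hm_spec
        simp at hm_spec
        linarith
      obtain ⟨j, hj⟩ := Nat.exists_eq_succ_of_ne_zero hm0
      have hjm : j < m := by omega
      have hmin : ¬ r ≤ 2^j * γ := Nat.find_min hex hjm
      push_neg at hmin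
      have hmN : m ≤ N := Nat.find_le (le_trans (le_trans hr hqK) hKle)
      have hjN : j < N := by omega
      refine Set.mem_biUnion (Finset.mem_range.2 hjN) ?_
      refine ⟨?_, ?_⟩
      · show |Gt (f k (X ω)) - β| ≤ 2^(j+1) * γ
        rw [hj] at hm_spec
        exact hm_spec
      · exact le_trans hmin.le hr
  -- per-k bound in ℝ≥0∞
  have hperk : ∀ k : Fin K,
      μ (E k) ≤ μ (D0 k) + ∑ j ∈ Finset.range N, μ (D k j) := by
    intro k
    calc μ (E k) ≤ μ (D0 k ∪ ⋃ j ∈ Finset.range N, D k j) := measure_mono (hcover k)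
      _ ≤ μ (D0 k) + μ (⋃ j ∈ Finset.range N, D k j) := measure_union_le _ _
      _ ≤ μ (D0 k) + ∑ j ∈ Finset.range N, μ (D k j) := by
          gcongr
          exact measure_biUnion_finset_le _ _
  have hperkR : ∀ k : Fin K,
      (μ (E k)).toReal ≤ (μ (D0 k)).toReal + ∑ j ∈ Finset.range N, (μ (D k j)).toReal := by
    intro k
    have hne : (μ (D0 k) + ∑ j ∈ Finset.range N, μ (D k j)) ≠ ⊤ := by
      apply ENNReal.add_ne_top.2
      constructor
      · exact measure_ne_top _ _
      · exact (ENNReal.sum_lt_top.2 fun j _ => measure_lt_top _ _).ne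
    have := ENNReal.toReal_mono hne (hperk k)
    rwa [ENNReal.toReal_add (measure_ne_top _ _)
      ((ENNReal.sum_lt_top.2 fun j _ => measure_lt_top _ _).ne),
      ENNReal.toReal_sum (fun j _ => measure_ne_top _ _)] at this
  -- the j-th dyadic term
  have hjterm : ∀ j : ℕ, ∑ k, (μ (D k j)).toReal ≤ γ / 2^j := by
    intro j
    have hsj : (0:ℝ) < 2^j * γ := by positivity
    have hsplit : ∀ k : Fin K, μ (D k j)
        ≤ ENNReal.ofReal ((K:ℝ)^2/(4*N*(2^j*γ)^2)) * μ {ω | f k (X ω) ∈ A j} := by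
      intro k
      exact aux_split μ K N f hf X Xi hX hXi hindep Gt hGtm Gh hGh k (A j) (hmA j)
        (2^j*γ) _ (fun t => hCheb t (2^j*γ) hsj)
    have hcR : (0:ℝ) ≤ (K:ℝ)^2/(4*N*(2^j*γ)^2) := by positivity
    have hsplitR : ∀ k : Fin K, (μ (D k j)).toReal
        ≤ ((K:ℝ)^2/(4*N*(2^j*γ)^2)) * (μ {ω | f k (X ω) ∈ A j}).toReal := by
      intro k
      have h1 := ENNReal.toReal_mono ?hne (hsplit k)
      · rwa [ENNReal.toReal_mul, ENNReal.toReal_ofReal hcR] at h1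
      · exact ENNReal.mul_ne_top ENNReal.ofReal_ne_top (measure_ne_top _ _)
    calc ∑ k, (μ (D k j)).toReal
        ≤ ∑ k, ((K:ℝ)^2/(4*N*(2^j*γ)^2)) * (μ {ω | f k (X ω) ∈ A j}).toReal :=
          Finset.sum_le_sum fun k _ => hsplitR k
      _ = ((K:ℝ)^2/(4*N*(2^j*γ)^2)) * ∑ k, (μ {ω | f k (X ω) ∈ A j}).toReal := by
          rw [Finset.mul_sum]
      _ ≤ ((K:ℝ)^2/(4*N*(2^j*γ)^2)) * (2 * (2^(j+1)*γ)) := by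
          apply mul_le_mul_of_nonneg_left _ hcR
          have hAev : ∀ k : Fin K, {ω | f k (X ω) ∈ A j}
              = {ω | |Gt (f k (X ω)) - β| ≤ 2^(j+1)*γ} := fun k => rfl
          simp only [hAev]
          exact hAC (2^(j+1)*γ) (by positivity)
      _ = γ / 2^j := by
          have hN' : (N:ℝ) ≠ 0 := Nat.cast_ne_zero.2 hN.ne'
          rw [hK2, pow_succ]
          field_simp
          ring
  -- put everything together
  have hmain : ∑ k, (μ (E k)).toReal ≤ 4 * γ := by
    have hswap : ∑ k : Fin K, ∑ j ∈ Finset.range N, (μ (D k j)).toReal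
        = ∑ j ∈ Finset.range N, ∑ k : Fin K, (μ (D k j)).toReal := Finset.sum_comm
    have hgeom : ∑ j ∈ Finset.range N, γ / 2^j ≤ 2 * γ := by
      have h1 : ∑ j ∈ Finset.range N, γ / 2^j = γ * ∑ j ∈ Finset.range N, (1/2:ℝ)^j := by
        rw [Finset.mul_sum]
        apply Finset.sum_congr rfl
        intro j _
        rw [div_pow, one_pow]
        ring
      have h2 : ∑ j ∈ Finset.range N, (1/2:ℝ)^j ≤ 2 := by
        rw [geom_sum_eq (by norm_num : (1/2:ℝ) ≠ 1)]
        have hp : (0:ℝ) ≤ (1/2:ℝ)^N := by positivity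
        have h3 : ((1/2:ℝ)^N - 1)/((1/2:ℝ) - 1) = 2 * (1 - (1/2:ℝ)^N) := by ring
        rw [h3]
        nlinarith
      rw [h1]
      nlinarith
    calc ∑ k, (μ (E k)).toReal
        ≤ ∑ k, ((μ (D0 k)).toReal + ∑ j ∈ Finset.range N, (μ (D k j)).toReal) :=
          Finset.sum_le_sum fun k _ => hperkR k
      _ = (∑ k, (μ (D0 k)).toReal) + ∑ j ∈ Finset.range N, ∑ k, (μ (D k j)).toReal := by
          rw [Finset.sum_add_distrib, hswap]
      _ ≤ 2 * γ + ∑ j ∈ Finset.range N, (γ / 2^j) := by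
          gcongr with j _
          · exact hAC γ hγ.le
          · exact hjterm j
      _ ≤ 2 * γ + 2 * γ := by linarith [hgeom]
      _ = 4 * γ := by ring
  calc ∑ k, (μ {ω | |Gt (f k (X ω)) - β| ≤ |Gh ω (f k (X ω)) - Gt (f k (X ω))|}).toReal
      = ∑ k, (μ (E k)).toReal := rfl
    _ ≤ 4 * γ := hmain
    _ ≤ 16 * K / Real.sqrt N := by
        rw [hγdef, show (4:ℝ) * ((K:ℝ)/Real.sqrt N) = (4*K)/Real.sqrt N by ring,
          show (16:ℝ) * (K:ℝ)/Real.sqrt N = (16*K)/Real.sqrt N by ring]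
        have h4 : (4:ℝ)*K ≤ 16*K := by
          have : (0:ℝ) ≤ (K:ℝ) := by positivity
          linarith
        exact div_le_div_of_nonneg_right h4 hsN.le
end

section
/- Under continuity of the c.d.f.s of f̂_k(X) given the training data, the empirical β-set Γ̂_β(X) = {k : Ĝ(f̂_k(X)) ≤ β} based on N unlabeled samples satisfies |E[|Γ̂_β(X)|] − β| ≤ C'·K/√N for an absolute constant C' > 0. -/
open MeasureTheory ProbabilityTheory Set Filter Topology

section Aux

variable {α : Type*} [MeasurableSpace α]

/-- integral of a boolean indicator -/
lemma aux_integral_ite (μ : Measure α) [IsFiniteMeasure μ] {P : α → Prop} [DecidablePred P]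
    (h : MeasurableSet {x | P x}) :
    ∫ x, (if P x then (1:ℝ) else 0) ∂μ = (μ {x | P x}).toReal := by
  have : (fun x => if P x then (1:ℝ) else 0) = {x | P x}.indicator (fun _ => (1:ℝ)) := by
    funext x
    by_cases hx : P x <;> simp [Set.indicator, hx]
  rw [this]
  exact integral_indicator_one (μ := μ) h

lemma aux_measurable_ite {P : α → Prop} [DecidablePred P] (h : MeasurableSet {x | P x}) :
    Measurable (fun x => if P x then (1:ℝ) else 0) := by
  have : (fun x => if P x then (1:ℝ) else 0) = {x | P x}.indicator (fun _ => (1:ℝ)) := by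
    funext x
    by_cases hx : P x <;> simp [Set.indicator, hx]
  rw [this]
  exact measurable_const.indicator h

end Aux

open MeasureTheory ProbabilityTheory Set Filter Topology
open scoped ENNReal NNReal

set_option maxHeartbeats 2000000 in
lemma aux_bridge {Ω : Type} [MeasurableSpace Ω] (μ : Measure Ω) [IsProbabilityMeasure μ]
    (N : ℕ) (hN : 0 < N) (K' : ℝ) (hK : 0 < K')
    (Y : Fin N → Ω → ℝ) (hYmeas : ∀ i, Measurable (Y i))
    (hY0 : ∀ i ω, 0 ≤ Y i ω) (hYK : ∀ i ω, Y i ω ≤ K')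
    (hpair : ∀ i j, i ≠ j → IndepFun (Y i) (Y j) μ)
    (m β : ℝ) (hm : ∀ i, ∫ ω, Y i ω ∂μ = m) :
    |(μ {ω | (1/(N:ℝ)) * ∑ i, Y i ω ≤ β}).toReal - (if m ≤ β then (1:ℝ) else 0)|
      ≤ 2 * (1 + ((m - β) / (K' / Real.sqrt N))^2)⁻¹ := by
  have hNpos : (0:ℝ) < N := by exact_mod_cast hN
  set a : ℝ := K' / Real.sqrt N with ha_def
  have ha : 0 < a := by positivity
  set s : ℝ := |m - β| with hs_def
  have hs0 : 0 ≤ s := abs_nonneg _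
  have hE : MeasurableSet {ω | (1/(N:ℝ)) * ∑ i, Y i ω ≤ β} := by
    apply measurableSet_le _ measurable_const
    exact measurable_const.mul (Finset.measurable_sum _ fun i _ => hYmeas i)
  set p : ℝ := (μ {ω | (1/(N:ℝ)) * ∑ i, Y i ω ≤ β}).toReal with hp_def
  have hp0 : 0 ≤ p := ENNReal.toReal_nonneg
  have hp1 : p ≤ 1 := by
    have h := prob_le_one (μ := μ) (s := {ω | (1/(N:ℝ)) * ∑ i, Y i ω ≤ β})
    simpa [hp_def] using ENNReal.toReal_mono ENNReal.one_ne_top h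
  have hsq : ((m - β) / a)^2 = s^2 / a^2 := by
    rw [div_pow, hs_def, sq_abs]
  have hden : (0:ℝ) < 1 + ((m - β) / a)^2 := by positivity
  clear_value s p
  rcases le_or_gt s a with hsa | hsa
  · -- trivial bound by 1
    have h1 : |p - (if m ≤ β then (1:ℝ) else 0)| ≤ 1 := by
      split_ifs <;> (rw [abs_le]; constructor <;> linarith)
    refine h1.trans ?_
    have h3 : 1 + ((m - β) / a)^2 ≤ 2 := by
      rw [hsq]
      have : s^2 ≤ a^2 := by nlinarith
      have := div_le_one_of_le₀ this (by positivity)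
      linarith
    calc (1:ℝ) = 2 * 2⁻¹ := by norm_num
    _ ≤ 2 * (1 + ((m - β) / a)^2)⁻¹ := by gcongr <;> norm_num
  · -- Chebyshev
    have hs : 0 < s := ha.trans hsa
    have hYL2 : ∀ i, MemLp (Y i) 2 μ := fun i =>
      MemLp.of_bound (hYmeas i).aestronglyMeasurable K'
        (ae_of_all _ fun ω => by
          rw [Real.norm_eq_abs, abs_le]
          exact ⟨by linarith [hY0 i ω], hYK i ω⟩)
    have hSL2 : MemLp (∑ i, Y i : Ω → ℝ) 2 μ := memLp_finset_sum' _ (fun i _ => hYL2 i)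
    have hSapp : ∀ ω, (∑ i, Y i : Ω → ℝ) ω = ∑ i, Y i ω :=
      fun ω => Finset.sum_apply ω Finset.univ Y
    have hES : μ[(∑ i, Y i : Ω → ℝ)] = N * m := by
      have h0 : ∫ ω, (∑ i, Y i : Ω → ℝ) ω ∂μ = ∫ ω, ∑ i, Y i ω ∂μ := by
        congr 1; funext ω; exact hSapp ω
      rw [show μ[(∑ i, Y i : Ω → ℝ)] = ∫ ω, (∑ i, Y i : Ω → ℝ) ω ∂μ from rfl, h0,
        integral_finset_sum _ (fun i _ => (hYL2 i).integrable one_le_two)]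
      simp [hm, Finset.sum_const, mul_comm]
    have hVar : variance (∑ i, Y i : Ω → ℝ) μ ≤ N * K'^2 := by
      rw [IndepFun.variance_sum (fun i _ => hYL2 i)
        (fun i _ j _ hij => hpair i j hij)]
      have hterm : ∀ i : Fin N, variance (Y i) μ ≤ K'^2 := by
        intro i
        refine (variance_le_expectation_sq (hYmeas i).aestronglyMeasurable).trans ?_
        have h1 : ∫ ω, (Y i ω)^2 ∂μ ≤ K'^2 := by
          have hc : ∫ _ω : Ω, K'^2 ∂μ = K'^2 := by simp
          rw [← hc]
          apply integral_mono ((hYL2 i).integrable_sq) (integrable_const _)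
          intro ω
          show Y i ω ^ 2 ≤ K' ^ 2
          nlinarith [hY0 i ω, hYK i ω]
        exact h1
      calc ∑ i, variance (Y i) μ ≤ ∑ _i : Fin N, K'^2 := Finset.sum_le_sum fun i _ => hterm i
      _ = N * K'^2 := by simp [Finset.sum_const]
    have hcheb := meas_ge_le_variance_div_sq (μ := μ) hSL2
      (c := (N:ℝ) * s) (by positivity)
    have hvb : variance (∑ i, Y i : Ω → ℝ) μ / ((N:ℝ) * s)^2 ≤ a^2 / s^2 := by
      have ha2 : a^2 = K'^2 / N := by
        rw [ha_def, div_pow, Real.sq_sqrt hNpos.le]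
      rw [ha2, div_le_div_iff₀ (by positivity) (by positivity)]
      have heq : K'^2 / (N:ℝ) * ((N:ℝ)*s)^2 = ((N:ℝ) * K'^2) * s^2 := by
        field_simp
      rw [heq]
      exact mul_le_mul_of_nonneg_right hVar (sq_nonneg s)
    have hfinal : a^2 / s^2 ≤ 2 * (1 + ((m - β) / a)^2)⁻¹ := by
      rw [hsq]
      have hinv : (1 + s^2 / a^2)⁻¹ = a^2 / (a^2 + s^2) := by
        field_simp
      rw [hinv, show (2:ℝ) * (a^2/(a^2+s^2)) = (2*a^2)/(a^2+s^2) by ring]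
      rw [div_le_div_iff₀ (by positivity) (by positivity)]
      have ha2s : a^2 ≤ s^2 := by nlinarith
      nlinarith [sq_nonneg a]
    have key : ∀ (q : ℝ≥0∞), q ≤ ENNReal.ofReal (variance (∑ i, Y i : Ω → ℝ) μ / ((N:ℝ)*s)^2) →
        q.toReal ≤ 2 * (1 + ((m - β) / a)^2)⁻¹ := by
      intro q hq
      have h1 : q.toReal ≤ variance (∑ i, Y i : Ω → ℝ) μ / ((N:ℝ)*s)^2 :=
        ENNReal.toReal_le_of_le_ofReal (div_nonneg (variance_nonneg _ _) (sq_nonneg _)) hq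
      exact h1.trans (hvb.trans hfinal)
    split_ifs with hmβ
    · -- m ≤ β, s = β − m
      have hsval : s = β - m := by rw [hs_def, abs_of_nonpos (by linarith)]; ring
      have hcompl : 1 - p =
          (μ {ω | (1/(N:ℝ)) * ∑ i, Y i ω ≤ β}ᶜ).toReal := by
        rw [prob_compl_eq_one_sub hE]
        rw [ENNReal.toReal_sub_of_le (prob_le_one) ENNReal.one_ne_top]
        simp [hp_def]
      have hsub : {ω | (1/(N:ℝ)) * ∑ i, Y i ω ≤ β}ᶜ ⊆
          {ω | (N:ℝ) * s ≤ |(∑ i, Y i : Ω → ℝ) ω - μ[(∑ i, Y i : Ω → ℝ)]|} := by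
        intro ω hω
        simp only [Set.mem_compl_iff, Set.mem_setOf_eq, not_le] at hω
        have hSω : (N:ℝ) * β < (∑ i, Y i : Ω → ℝ) ω := by
          rw [hSapp]
          have h2 : (N:ℝ) * β < (N:ℝ) * (1/(N:ℝ) * ∑ i, Y i ω) :=
            (mul_lt_mul_iff_right₀ hNpos).mpr hω
          calc (N:ℝ)*β < (N:ℝ) * (1/(N:ℝ) * ∑ i, Y i ω) := h2
          _ = ∑ i, Y i ω := by field_simp
        simp only [Set.mem_setOf_eq, hES]
        rw [hsval]
        have hfin : (N:ℝ) * (β - m) ≤ (∑ i, Y i : Ω → ℝ) ω - N * m := by nlinarith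
        exact hfin.trans (le_abs_self _)
      have := (measure_mono hsub).trans hcheb
      have h2 := key _ this
      rw [← hcompl] at h2
      rw [abs_sub_comm, abs_of_nonneg (by linarith)]
      linarith
    · -- β < m, s = m − β
      push_neg at hmβ
      have hsval : s = m - β := by rw [hs_def, abs_of_pos (by linarith)]
      have hsub : {ω | (1/(N:ℝ)) * ∑ i, Y i ω ≤ β} ⊆
          {ω | (N:ℝ) * s ≤ |(∑ i, Y i : Ω → ℝ) ω - μ[(∑ i, Y i : Ω → ℝ)]|} := by
        intro ω hω
        simp only [Set.mem_setOf_eq] at hω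
        have hSω : (∑ i, Y i : Ω → ℝ) ω ≤ (N:ℝ) * β := by
          rw [hSapp]
          have h2 : (N:ℝ) * (1/(N:ℝ) * ∑ i, Y i ω) ≤ (N:ℝ) * β :=
            (mul_le_mul_iff_right₀ hNpos).mpr hω
          calc ∑ i, Y i ω = (N:ℝ) * (1/(N:ℝ) * ∑ i, Y i ω) := by field_simp
          _ ≤ (N:ℝ) * β := h2
        simp only [Set.mem_setOf_eq, hES]
        rw [hsval]
        have hfin : (N:ℝ) * (m - β) ≤ -((∑ i, Y i : Ω → ℝ) ω - N * m) := by nlinarith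
        exact hfin.trans ((neg_le_abs _))
      have := (measure_mono hsub).trans hcheb
      have h2 := key _ this
      rw [sub_zero]
      rw [abs_of_nonneg hp0, hp_def]
      exact h2

open MeasureTheory ProbabilityTheory Set Filter Topology
open scoped ENNReal NNReal

set_option maxHeartbeats 1000000 in
lemma aux_lambda_eq {𝒳 : Type} [MeasurableSpace 𝒳] (ν : Measure 𝒳) [IsProbabilityMeasure ν]
    (K : ℕ) (hK : 0 < K) (f : Fin K → 𝒳 → ℝ) (hf : ∀ k, Measurable (f k))
    (hcdf : ∀ k, Continuous fun t : ℝ => (ν {x | f k x ≤ t}).toReal) :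
    ∃ G : ℝ → ℝ, Continuous G ∧
      (∀ t, G t = ∑ k, (ν {x | t ≤ f k x}).toReal) ∧
      (∑ k, ν.map (fun x => G (f k x))) = volume.restrict (Set.Ioc 0 (K:ℝ)) := by
  have hKpos : (0:ℝ) < K := by exact_mod_cast hK
  -- the complement/continuity identity
  have hg : ∀ (k : Fin K) (t : ℝ),
      (ν {x | t ≤ f k x}).toReal = 1 - (ν {x | f k x ≤ t}).toReal := by
    intro k t
    have hlt_eq : (ν {x | f k x < t}).toReal = (ν {x | f k x ≤ t}).toReal := by
      set s : ℕ → Set 𝒳 := fun n => {x | f k x ≤ t - 1/(n+1)} with hs_def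
      have hmono : Monotone s := by
        intro n m hnm x hx
        simp only [hs_def, Set.mem_setOf_eq] at hx ⊢
        have h1 : (1:ℝ)/(m+1) ≤ 1/(n+1) := by
          apply div_le_div_of_nonneg_left one_pos.le (by positivity)
          exact_mod_cast Nat.add_le_add_right hnm 1
        linarith
      have hunion : (⋃ n, s n) = {x | f k x < t} := by
        ext x
        simp only [Set.mem_iUnion, hs_def, Set.mem_setOf_eq]
        constructor
        · rintro ⟨n, hn⟩
          have : (0:ℝ) < 1/(n+1) := by positivity
          linarith
        · intro hx
          obtain ⟨n, hn⟩ := exists_nat_one_div_lt (sub_pos.mpr hx)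
          exact ⟨n, by push_cast at hn ⊢; linarith⟩
      have h1 : Tendsto (fun n => ν (s n)) atTop (𝓝 (ν {x | f k x < t})) := by
        have := tendsto_measure_iUnion_atTop (μ := ν) hmono
        rwa [hunion] at this
      have h2 : Tendsto (fun n => (ν (s n)).toReal) atTop
          (𝓝 ((ν {x | f k x < t}).toReal)) :=
        ((ENNReal.tendsto_toReal (measure_ne_top _ _)).comp h1)
      have h3 : Tendsto (fun n : ℕ => (ν (s n)).toReal) atTop
          (𝓝 ((ν {x | f k x ≤ t}).toReal)) := by
        have hseq : Tendsto (fun n : ℕ => t - 1/((n:ℝ)+1)) atTop (𝓝 t) := by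
          have := tendsto_one_div_add_atTop_nhds_zero_nat (𝕜 := ℝ)
          have h := tendsto_const_nhds (x := t) (f := atTop (α := ℕ)) |>.sub this
          simpa using h
        have := ((hcdf k).tendsto t).comp hseq
        exact this
      exact tendsto_nhds_unique h2 h3
    have hcompl : {x | t ≤ f k x} = {x | f k x < t}ᶜ := by
      ext x; simp [not_lt]
    rw [hcompl, measure_compl (by exact measurableSet_lt (hf k) measurable_const)
      (measure_ne_top _ _)]
    rw [ENNReal.toReal_sub_of_le (measure_mono (subset_univ _)) (measure_ne_top _ _)]
    rw [measure_univ, ENNReal.toReal_one, hlt_eq]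
  set G : ℝ → ℝ := fun t => ∑ k, (1 - (ν {x | f k x ≤ t}).toReal) with hG_def
  have hGdef : ∀ t, G t = ∑ k, (ν {x | t ≤ f k x}).toReal := by
    intro t; rw [hG_def]
    show ∑ k, (1 - (ν {x | f k x ≤ t}).toReal) = _
    exact Finset.sum_congr rfl fun k _ => (hg k t).symm
  have hGcont : Continuous G := by
    rw [hG_def]
    exact continuous_finset_sum _ fun k _ => continuous_const.sub (hcdf k)
  have htoReal_le_one : ∀ s : Set 𝒳, (ν s).toReal ≤ 1 := by
    intro s
    have := ENNReal.toReal_mono (measure_ne_top ν univ) (measure_mono (subset_univ s))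
    simpa using this
  have hGanti : Antitone G := by
    intro t t' htt'
    rw [hGdef, hGdef]
    apply Finset.sum_le_sum
    intro k _
    exact ENNReal.toReal_mono (measure_ne_top _ _)
      (measure_mono (fun x hx => le_trans htt' hx))
  refine ⟨G, hGcont, hGdef, ?_⟩
  have hGmeas : ∀ k : Fin K, Measurable fun x => G (f k x) :=
    fun k => hGcont.measurable.comp (hf k)
  -- the key identity on (0, K)
  have key : ∀ u ∈ Set.Ioo (0:ℝ) (K:ℝ),
      (∑ k, ν.map (fun x => G (f k x))) (Set.Iic u) = ENNReal.ofReal u := by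
    intro u hu
    have happly : (∑ k, ν.map (fun x => G (f k x))) (Set.Iic u)
        = ∑ k, ν {x | G (f k x) ≤ u} := by
      rw [Measure.finset_sum_apply]
      refine Finset.sum_congr rfl fun k _ => ?_
      rw [Measure.map_apply (hGmeas k) measurableSet_Iic]
      rfl
    -- existence of points with small/large G values
    have htendsto0 : Tendsto (fun n : ℕ => G n) atTop (𝓝 0) := by
      have : ∀ k : Fin K, Tendsto (fun n : ℕ => (ν {x | (n:ℝ) ≤ f k x}).toReal)
          atTop (𝓝 0) := by
        intro k
        have hanti : Antitone (fun n : ℕ => {x | (n:ℝ) ≤ f k x}) := by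
          intro n m hnm x hx
          simp only [Set.mem_setOf_eq] at hx ⊢
          exact le_trans (by exact_mod_cast hnm) hx
        have hinter : (⋂ n : ℕ, {x | (n:ℝ) ≤ f k x}) = ∅ := by
          ext x
          simp only [Set.mem_iInter, Set.mem_setOf_eq, Set.mem_empty_iff_false, iff_false,
            not_forall]
          obtain ⟨n, hn⟩ := exists_nat_gt (f k x)
          exact ⟨n, by push_neg; exact hn⟩
        have h1 := tendsto_measure_iInter_atTop (μ := ν)
          (fun n => ((measurableSet_le measurable_const (hf k))).nullMeasurableSet)
          hanti ⟨0, measure_ne_top _ _⟩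
        rw [hinter] at h1
        simp only [measure_empty] at h1
        exact (ENNReal.tendsto_toReal (by simp)).comp h1
      have hsum := tendsto_finset_sum Finset.univ (fun k _ => this k)
      simp only [Finset.sum_const_zero] at hsum
      have : (fun n : ℕ => G n) = fun n : ℕ => ∑ k, (ν {x | (n:ℝ) ≤ f k x}).toReal := by
        funext n; exact hGdef n
      rw [this]
      exact hsum
    have htendstoK : Tendsto (fun n : ℕ => G (-(n:ℝ))) atTop (𝓝 (K:ℝ)) := by
      have : ∀ k : Fin K, Tendsto (fun n : ℕ => (ν {x | -(n:ℝ) ≤ f k x}).toReal)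
          atTop (𝓝 1) := by
        intro k
        have hmono : Monotone (fun n : ℕ => {x | -(n:ℝ) ≤ f k x}) := by
          intro n m hnm x hx
          simp only [Set.mem_setOf_eq] at hx ⊢
          have : (n:ℝ) ≤ m := by exact_mod_cast hnm
          linarith
        have hunion : (⋃ n : ℕ, {x | -(n:ℝ) ≤ f k x}) = univ := by
          ext x
          simp only [Set.mem_iUnion, Set.mem_setOf_eq, Set.mem_univ, iff_true]
          obtain ⟨n, hn⟩ := exists_nat_ge (-(f k x))
          exact ⟨n, by linarith⟩
        have h1 := tendsto_measure_iUnion_atTop (μ := ν) hmono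
        rw [hunion, measure_univ] at h1
        exact (ENNReal.tendsto_toReal (by simp)).comp h1
      have hsum := tendsto_finset_sum Finset.univ (fun k _ => this k)
      have hcard : ∑ _k : Fin K, (1:ℝ) = (K:ℝ) := by simp
      rw [hcard] at hsum
      have : (fun n : ℕ => G (-(n:ℝ)))
          = fun n : ℕ => ∑ k, (ν {x | -(n:ℝ) ≤ f k x}).toReal := by
        funext n; exact hGdef _
      rw [this]
      exact hsum
    obtain ⟨t₁, ht₁⟩ := (htendsto0.eventually_lt_const hu.1).exists
    obtain ⟨t₀, ht₀⟩ := (htendstoK.eventually_const_lt hu.2).exists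
    set S : Set ℝ := {t | G t ≤ u} with hS_def
    have hne : S.Nonempty := ⟨t₁, le_of_lt ht₁⟩
    have hbdd : BddBelow S := by
      refine ⟨-(t₀:ℝ), fun t ht => ?_⟩
      by_contra hcon
      push_neg at hcon
      have := hGanti hcon.le
      have : u < G t := lt_of_lt_of_le ht₀ this
      exact absurd ht (by simp [hS_def]; linarith)
    have hSclosed : IsClosed S := isClosed_le hGcont continuous_const
    set tstar := sInf S with htstar_def
    have htstar_mem : tstar ∈ S := hSclosed.csInf_mem hne hbdd
    have hGtstar_ge : u ≤ G tstar := by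
      have hlim : Tendsto (fun n : ℕ => G (tstar - 1/((n:ℝ)+1))) atTop (𝓝 (G tstar)) := by
        apply (hGcont.tendsto tstar).comp
        have := tendsto_one_div_add_atTop_nhds_zero_nat (𝕜 := ℝ)
        have h := tendsto_const_nhds (x := tstar) (f := atTop (α := ℕ)) |>.sub this
        simpa using h
      apply ge_of_tendsto hlim
      apply Eventually.of_forall
      intro n
      have hnot : tstar - 1/((n:ℝ)+1) ∉ S := by
        intro hmem
        have := csInf_le hbdd hmem
        have hpos : (0:ℝ) < 1/((n:ℝ)+1) := by positivity
        rw [← htstar_def] at this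
        linarith
      have : u < G (tstar - 1/((n:ℝ)+1)) := by
        by_contra hc
        push_neg at hc
        exact hnot hc
      exact this.le
    have hGtstar : G tstar = u := le_antisymm htstar_mem hGtstar_ge
    have hSeq : ∀ t, G t ≤ u ↔ tstar ≤ t := by
      intro t
      constructor
      · intro h; exact csInf_le hbdd h
      · intro h; exact (hGanti h).trans (le_of_eq hGtstar)
    have hsets : ∀ k : Fin K, {x | G (f k x) ≤ u} = {x | tstar ≤ f k x} := by
      intro k; ext x; exact hSeq (f k x)
    rw [happly]
    have hsum_ne_top : (∑ k, ν {x | tstar ≤ f k x}) ≠ ⊤ := by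
      apply (ENNReal.sum_lt_top.mpr (fun k _ => measure_lt_top _ _)).ne
    calc ∑ k, ν {x | G (f k x) ≤ u} = ∑ k, ν {x | tstar ≤ f k x} := by
          exact Finset.sum_congr rfl fun k _ => by rw [hsets k]
    _ = ENNReal.ofReal ((∑ k, ν {x | tstar ≤ f k x}).toReal) :=
        (ENNReal.ofReal_toReal hsum_ne_top).symm
    _ = ENNReal.ofReal u := by
        rw [ENNReal.toReal_sum (fun k _ => measure_ne_top _ _)]
        rw [← hGdef tstar, hGtstar]
  -- finiteness of the sum measure
  haveI hfin : IsFiniteMeasure (∑ k, ν.map (fun x => G (f k x))) := by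
    constructor
    rw [Measure.finset_sum_apply]
    have : ∀ k : Fin K, (ν.map (fun x => G (f k x))) univ = 1 := by
      intro k
      haveI : IsProbabilityMeasure (ν.map (fun x => G (f k x))) :=
        Measure.isProbabilityMeasure_map (hGmeas k).aemeasurable
      exact measure_univ
    rw [Finset.sum_congr rfl fun k _ => this k]
    simp
  -- extensionality via Iic
  apply Measure.ext_of_Iic
  intro u
  have hRHS : (volume.restrict (Set.Ioc 0 (K:ℝ))) (Set.Iic u)
      = ENNReal.ofReal (min u (K:ℝ)) := by
    rw [Measure.restrict_apply measurableSet_Iic]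
    have : Set.Iic u ∩ Set.Ioc 0 (K:ℝ) = Set.Ioc 0 (min u (K:ℝ)) := by
      ext x
      simp only [Set.mem_inter_iff, Set.mem_Iic, Set.mem_Ioc, le_min_iff]
      tauto
    rw [this, Real.volume_Ioc, sub_zero]
  rw [hRHS]
  rcases le_or_gt u 0 with hu0 | hu0
  · -- u ≤ 0
    have hmin : ENNReal.ofReal (min u (K:ℝ)) = 0 := by
      rw [ENNReal.ofReal_eq_zero]
      exact le_trans (min_le_left _ _) hu0
    rw [hmin]
    -- show LHS = 0 by approximation
    set c : ℕ → ℝ := fun n => min ((1:ℝ)/(n+1)) ((K:ℝ)/2) with hc_def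
    have hc_mem : ∀ n, c n ∈ Set.Ioo (0:ℝ) (K:ℝ) := by
      intro n
      constructor
      · apply lt_min (by positivity) (by positivity)
      · exact lt_of_le_of_lt (min_le_right _ _) (by linarith)
    have hc_tendsto : Tendsto c atTop (𝓝 0) := by
      apply squeeze_zero (fun n => (hc_mem n).1.le)
        (fun n => min_le_left _ _)
      have := tendsto_one_div_add_atTop_nhds_zero_nat (𝕜 := ℝ)
      simpa using this
    have hle : ∀ n, (∑ k, ν.map (fun x => G (f k x))) (Set.Iic u)
        ≤ ENNReal.ofReal (c n) := by
      intro n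
      rw [← key (c n) (hc_mem n)]
      exact measure_mono (Set.Iic_subset_Iic.mpr (le_trans hu0 (hc_mem n).1.le))
    have : Tendsto (fun n => ENNReal.ofReal (c n)) atTop (𝓝 0) := by
      have := ENNReal.tendsto_ofReal hc_tendsto
      simpa using this
    have hfinal := ge_of_tendsto this (Eventually.of_forall hle)
    exact le_antisymm hfinal zero_le
  · rcases lt_or_ge u (K:ℝ) with huK | huK
    · -- 0 < u < K
      rw [min_eq_left huK.le]
      exact key u ⟨hu0, huK⟩
    · -- K ≤ u
      rw [min_eq_right huK]
      apply le_antisymm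
      · -- ≤ ofReal K  : bound by total mass
        have htotal : (∑ k, ν.map (fun x => G (f k x))) univ = ENNReal.ofReal (K:ℝ) := by
          rw [Measure.finset_sum_apply]
          have : ∀ k : Fin K, (ν.map (fun x => G (f k x))) univ = 1 := by
            intro k
            haveI : IsProbabilityMeasure (ν.map (fun x => G (f k x))) :=
              Measure.isProbabilityMeasure_map (hGmeas k).aemeasurable
            exact measure_univ
          rw [Finset.sum_congr rfl fun k _ => this k]
          simp [ENNReal.ofReal_natCast]
        rw [← htotal]
        exact measure_mono (subset_univ _)
      · -- ≥ : approximation from below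
        set c : ℕ → ℝ := fun n => min ((1:ℝ)/(n+1)) ((K:ℝ)/2) with hc_def
        have hc_mem : ∀ n, (K:ℝ) - c n ∈ Set.Ioo (0:ℝ) (K:ℝ) := by
          intro n
          have h1 : (0:ℝ) < min ((1:ℝ)/(n+1)) ((K:ℝ)/2) :=
            lt_min (by positivity) (by positivity)
          have h2 : min ((1:ℝ)/(n+1)) ((K:ℝ)/2) ≤ (K:ℝ)/2 := min_le_right _ _
          constructor <;> [linarith; linarith]
        have hc_tendsto : Tendsto (fun n => (K:ℝ) - c n) atTop (𝓝 (K:ℝ)) := by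
          have h0 : Tendsto c atTop (𝓝 0) := by
            apply squeeze_zero (fun n => (lt_min (by positivity) (by positivity)).le)
              (fun n => min_le_left _ _)
            have := tendsto_one_div_add_atTop_nhds_zero_nat (𝕜 := ℝ)
            simpa using this
          have := tendsto_const_nhds (x := (K:ℝ)) (f := atTop (α := ℕ)) |>.sub h0
          simpa using this
        have hle : ∀ n, ENNReal.ofReal ((K:ℝ) - c n)
            ≤ (∑ k, ν.map (fun x => G (f k x))) (Set.Iic u) := by
          intro n
          rw [← key _ (hc_mem n)]
          apply measure_mono (Set.Iic_subset_Iic.mpr ?_)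
          have := (hc_mem n).2
          linarith
        have htend : Tendsto (fun n => ENNReal.ofReal ((K:ℝ) - c n)) atTop
            (𝓝 (ENNReal.ofReal (K:ℝ))) := ENNReal.tendsto_ofReal hc_tendsto
        exact le_of_tendsto htend (Eventually.of_forall hle)


set_option maxHeartbeats 4000000 in
/-- (Proposition on the information of the empirical β-set.) There is an absolute
constant `C' > 0` such that the empirical β-set `Γ̂_β(X) = {k : Ĝ(f̂_k(X)) ≤ β}` based on `N`
i.i.d. unlabeled samples satisfies `|E[|Γ̂_β(X)|] − β| ≤ C'·K/√N`. -/
theorem empirical_beta_set_information :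
    ∃ C' : ℝ, 0 < C' ∧
      ∀ (Ω 𝒳 : Type) [MeasurableSpace Ω] [MeasurableSpace 𝒳]
        (μ : Measure Ω) [IsProbabilityMeasure μ]
        (K N : ℕ), 0 < K → 0 < N →
        ∀ (f : Fin K → 𝒳 → ℝ), (∀ k, Measurable (f k)) →
        ∀ (X : Ω → 𝒳) (Xi : Fin N → Ω → 𝒳), Measurable X → (∀ i, Measurable (Xi i)) →
        (∀ i, Measure.map (Xi i) μ = Measure.map X μ) →
        iIndepFun
          (Sum.elim Xi fun _ : Unit => X) μ →
        -- continuity of the c.d.f.s of the scores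
        (∀ k, Continuous fun t : ℝ => (μ {ω | f k (X ω) ≤ t}).toReal) →
        ∀ (Gh : Ω → ℝ → ℝ),
          (∀ ω t, Gh ω t = (1 / (N : ℝ)) *
            ∑ i, ∑ k, (if t ≤ f k (Xi i ω) then (1:ℝ) else 0)) →
        ∀ β : ℝ, β ∈ Set.Ioo 0 (K : ℝ) →
        |(∫ ω, (Set.ncard {k : Fin K | Gh ω (f k (X ω)) ≤ β} : ℝ) ∂μ) - β|
          ≤ C' * K / Real.sqrt N := by
  refine ⟨2 * Real.pi, by positivity, ?_⟩
  intro Ω 𝒳 _ _ μ _ K N hK hN f hf X Xi hXmeas hXimeas hmap hindep hcdf Gh hGh β hβ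
  have hNpos : (0:ℝ) < N := by exact_mod_cast hN
  have hKpos : (0:ℝ) < K := by exact_mod_cast hK
  set ν := μ.map X with hν_def
  haveI : IsProbabilityMeasure ν := Measure.isProbabilityMeasure_map hXmeas.aemeasurable
  have hcdf' : ∀ k, Continuous fun t : ℝ => (ν {x | f k x ≤ t}).toReal := by
    intro k
    have heq : (fun t : ℝ => (ν {x | f k x ≤ t}).toReal)
        = fun t : ℝ => (μ {ω | f k (X ω) ≤ t}).toReal := by
      funext t
      rw [hν_def, Measure.map_apply hXmeas (measurableSet_le (hf k) measurable_const)]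
      rfl
    rw [heq]; exact hcdf k
  obtain ⟨G, hGcont, hGdef, hlam⟩ := aux_lambda_eq ν K hK f hf hcdf'
  have hGmeas : ∀ k : Fin K, Measurable fun x => G (f k x) :=
    fun k => hGcont.measurable.comp (hf k)
  set a : ℝ := (K:ℝ) / Real.sqrt N with ha_def
  have ha : 0 < a := by positivity
  set ψ : ℝ → ℝ := fun u => 2 * (1 + ((u - β)/a)^2)⁻¹ with hψ_def
  have hψcont : Continuous ψ := by
    rw [hψ_def]
    apply continuous_const.mul
    apply Continuous.inv₀
    · continuity
    · intro u; positivity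
  have hψnonneg : ∀ u, 0 ≤ ψ u := fun u => by rw [hψ_def]; positivity
  have hψle : ∀ u, ψ u ≤ 2 := by
    intro u; rw [hψ_def]
    have h1 : (1:ℝ) ≤ 1 + ((u - β)/a)^2 := by nlinarith [sq_nonneg ((u-β)/a)]
    have h2 : (1 + ((u - β)/a)^2)⁻¹ ≤ (1:ℝ)⁻¹ := by
      gcongr
    simp only [inv_one] at h2
    linarith
  -- independence of X and the vector of Xi
  set V : Ω → (Fin N → 𝒳) := fun ω i => Xi i ω with hV_def
  have hVmeas : Measurable V := measurable_pi_lambda V (fun i => hXimeas i)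
  haveI : IsProbabilityMeasure (μ.map V) := Measure.isProbabilityMeasure_map hVmeas.aemeasurable
  have hindXV : IndepFun X V μ := by
    have hmeasall : ∀ s : Sum (Fin N) Unit, Measurable ((Sum.elim Xi fun _ => X) s) := by
      intro s; cases s with
      | inl i => exact hXimeas i
      | inr u => exact hXmeas
    have h := hindep.indepFun_finset {Sum.inr ()} (Finset.univ.image Sum.inl)
      (by simp) hmeasall
    have hφ : Measurable fun g : { s // s ∈ ({Sum.inr ()} : Finset (Sum (Fin N) Unit)) } → 𝒳 =>
        g ⟨Sum.inr (), Finset.mem_singleton_self _⟩ := measurable_pi_apply _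
    have hτ : Measurable fun g : { s // s ∈ Finset.univ.image (Sum.inl : Fin N → Sum (Fin N) Unit) } → 𝒳 =>
        (fun i : Fin N => g ⟨Sum.inl i, Finset.mem_image_of_mem _ (Finset.mem_univ i)⟩) :=
      measurable_pi_lambda
        (fun (g : { s // s ∈ Finset.univ.image (Sum.inl : Fin N → Sum (Fin N) Unit) } → 𝒳)
          (i : Fin N) => g ⟨Sum.inl i, Finset.mem_image_of_mem _ (Finset.mem_univ i)⟩)
        (fun i => measurable_pi_apply _)
    exact h.comp hφ hτ
  have hjoint : μ.map (fun ω => (X ω, V ω)) = ν.prod (μ.map V) :=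
    (indepFun_iff_map_prod_eq_prod_map_map hXmeas.aemeasurable hVmeas.aemeasurable).mp hindXV
  -- event sets
  set E : Fin K → Set (𝒳 × (Fin N → 𝒳)) := fun k =>
    {q | (1/(N:ℝ)) * ∑ i, ∑ j, (if f k q.1 ≤ f j (q.2 i) then (1:ℝ) else 0) ≤ β} with hE_def
  have hEmeas : ∀ k, MeasurableSet (E k) := by
    intro k
    apply measurableSet_le _ measurable_const
    apply Measurable.const_mul
    apply Finset.measurable_sum
    intro i _
    apply Finset.measurable_sum
    intro j _
    exact aux_measurable_ite (measurableSet_le ((hf k).comp measurable_fst)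
      ((hf j).comp ((measurable_pi_apply i).comp measurable_snd)))
  have hevent : ∀ k, {ω | Gh ω (f k (X ω)) ≤ β} = (fun ω => (X ω, V ω)) ⁻¹' (E k) := by
    intro k; ext ω
    simp only [Set.mem_setOf_eq, Set.mem_preimage, hE_def, hGh, hV_def]
  have heventmeas : ∀ k, MeasurableSet {ω | Gh ω (f k (X ω)) ≤ β} := by
    intro k
    rw [hevent k]
    exact (hXmeas.prodMk hVmeas) (hEmeas k)
  -- section probabilities
  set p : Fin K → 𝒳 → ℝ≥0∞ := fun k x =>
    μ {ω | (1/(N:ℝ)) * ∑ i, ∑ j, (if f k x ≤ f j (Xi i ω) then (1:ℝ) else 0) ≤ β} with hp_def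
  have hsec : ∀ k x, (μ.map V) (Prod.mk x ⁻¹' (E k)) = p k x := by
    intro k x
    rw [Measure.map_apply hVmeas (measurable_prodMk_left (hEmeas k))]
    rfl
  have hmeasp : ∀ k, Measurable (p k) := by
    intro k
    have heq : p k = fun x => (μ.map V) (Prod.mk x ⁻¹' (E k)) := by
      funext x; rw [hsec]
    rw [heq]
    exact measurable_measure_prodMk_left (hEmeas k)
  have hPk : ∀ k, μ {ω | Gh ω (f k (X ω)) ≤ β} = ∫⁻ x, p k x ∂ν := by
    intro k
    rw [hevent k, ← Measure.map_apply (hXmeas.prodMk hVmeas) (hEmeas k), hjoint,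
      Measure.prod_apply (hEmeas k)]
    exact lintegral_congr fun x => hsec k x
  have hple1 : ∀ k x, (p k x).toReal ≤ 1 := by
    intro k x
    have h1 : p k x ≤ 1 := prob_le_one
    calc (p k x).toReal ≤ (1:ℝ≥0∞).toReal := ENNReal.toReal_mono ENNReal.one_ne_top h1
    _ = 1 := rfl
  have hPk' : ∀ k, (μ {ω | Gh ω (f k (X ω)) ≤ β}).toReal = ∫ x, (p k x).toReal ∂ν := by
    intro k
    rw [hPk k]
    exact (integral_toReal (hmeasp k).aemeasurable
      (ae_of_all _ (fun x => measure_lt_top μ _))).symm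
  -- Chebyshev bridge
  have hbridge : ∀ (k : Fin K) (x : 𝒳), |(p k x).toReal - (if G (f k x) ≤ β then (1:ℝ) else 0)|
      ≤ ψ (G (f k x)) := by
    intro k x
    have hYmeas : ∀ i : Fin N,
        Measurable (fun ω => ∑ j, (if f k x ≤ f j (Xi i ω) then (1:ℝ) else 0)) := by
      intro i
      apply Finset.measurable_sum
      intro j _
      exact aux_measurable_ite (measurableSet_le measurable_const ((hf j).comp (hXimeas i)))
    have hgmeas : Measurable (fun y : 𝒳 => ∑ j, (if f k x ≤ f j y then (1:ℝ) else 0)) := by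
      apply Finset.measurable_sum
      intro j _
      exact aux_measurable_ite (measurableSet_le measurable_const (hf j))
    have happ := aux_bridge μ N hN (K:ℝ) hKpos
      (fun i ω => ∑ j, (if f k x ≤ f j (Xi i ω) then (1:ℝ) else 0))
      hYmeas
      (fun i ω => Finset.sum_nonneg fun j _ => by split_ifs <;> norm_num)
      (fun i ω => by
        calc ∑ j, (if f k x ≤ f j (Xi i ω) then (1:ℝ) else 0)
            ≤ ∑ _j : Fin K, (1:ℝ) := Finset.sum_le_sum fun j _ => by split_ifs <;> norm_num
        _ = (K:ℝ) := by simp)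
      (fun i j hij => by
        have h1 : IndepFun (Xi i) (Xi j) μ :=
          hindep.indepFun (fun h => hij (Sum.inl.inj h))
        exact h1.comp hgmeas hgmeas)
      (G (f k x)) β
      (fun i => by
        show (∫ ω, ∑ j, (if f k x ≤ f j (Xi i ω) then (1:ℝ) else 0) ∂μ) = G (f k x)
        rw [integral_finset_sum Finset.univ (fun j _ =>
          show Integrable (fun ω => if f k x ≤ f j (Xi i ω) then (1:ℝ) else 0) μ from
          (Integrable.mono' (integrable_const 1)
            (aux_measurable_ite (show MeasurableSet {ω | f k x ≤ f j (Xi i ω)} from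
              measurableSet_le measurable_const
              ((hf j).comp (hXimeas i)))).aestronglyMeasurable
            (ae_of_all _ (fun ω => by split_ifs <;> simp))))]
        rw [hGdef]
        refine Finset.sum_congr rfl fun j _ => ?_
        rw [show (∫ ω, (if f k x ≤ f j (Xi i ω) then (1:ℝ) else 0) ∂μ)
            = (μ {ω | f k x ≤ f j (Xi i ω)}).toReal from
          aux_integral_ite μ (measurableSet_le measurable_const ((hf j).comp (hXimeas i)))]
        congr 1
        rw [show {ω | f k x ≤ f j (Xi i ω)} = Xi i ⁻¹' {y | f k x ≤ f j y} from rfl,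
          ← Measure.map_apply (hXimeas i) (measurableSet_le measurable_const (hf j)),
          hmap i])
    exact happ
  -- exact information of the intermediate set
  have hQ : ∑ k, (ν {x | G (f k x) ≤ β}).toReal = β := by
    have h := congrArg (fun m : Measure ℝ => m (Set.Iic β)) hlam
    simp only [Measure.finset_sum_apply] at h
    have hL : ∀ k : Fin K, (ν.map (fun x => G (f k x))) (Set.Iic β)
        = ν {x | G (f k x) ≤ β} := by
      intro k
      rw [Measure.map_apply (hGmeas k) measurableSet_Iic]
      rfl
    rw [Finset.sum_congr rfl (fun k _ => hL k)] at h
    have hR : (volume.restrict (Set.Ioc 0 (K:ℝ))) (Set.Iic β) = ENNReal.ofReal β := by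
      rw [Measure.restrict_apply measurableSet_Iic]
      have : Set.Iic β ∩ Set.Ioc 0 (K:ℝ) = Set.Ioc 0 β := by
        ext x
        simp only [Set.mem_inter_iff, Set.mem_Iic, Set.mem_Ioc]
        constructor
        · rintro ⟨h1, h2, h3⟩; exact ⟨h2, h1⟩
        · rintro ⟨h1, h2⟩; exact ⟨h2, h1, h2.trans hβ.2.le⟩
      rw [this, Real.volume_Ioc, sub_zero]
    rw [hR] at h
    have h2 := congrArg ENNReal.toReal h
    rw [ENNReal.toReal_sum (fun k _ => measure_ne_top _ _),
      ENNReal.toReal_ofReal hβ.1.le] at h2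
    exact h2
  -- integrability over ν
  have hint1 : ∀ k, Integrable (fun x => (p k x).toReal) ν := by
    intro k
    apply Integrable.mono' (integrable_const 1)
      (hmeasp k).ennreal_toReal.aestronglyMeasurable
    apply ae_of_all; intro x
    show ‖(p k x).toReal‖ ≤ 1
    rw [Real.norm_eq_abs, abs_of_nonneg ENNReal.toReal_nonneg]
    exact hple1 k x
  have hint2 : ∀ k : Fin K, Integrable (fun x => if G (f k x) ≤ β then (1:ℝ) else 0) ν := by
    intro k
    apply Integrable.mono' (integrable_const 1)
      (aux_measurable_ite (measurableSet_le (hGmeas k) measurable_const)).aestronglyMeasurable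
    apply ae_of_all; intro x; split_ifs <;> simp
  have hint3 : ∀ k : Fin K, Integrable (fun x => ψ (G (f k x))) ν := by
    intro k
    apply Integrable.mono' (integrable_const 2)
      ((hψcont.comp hGcont).measurable.comp (hf k)).aestronglyMeasurable
    apply ae_of_all; intro x
    show ‖ψ (G (f k x))‖ ≤ 2
    rw [Real.norm_eq_abs, abs_of_nonneg (hψnonneg _)]
    exact hψle _
  -- per-class deviation bound
  have hdiff : ∀ k : Fin K,
      |(μ {ω | Gh ω (f k (X ω)) ≤ β}).toReal - (ν {x | G (f k x) ≤ β}).toReal|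
      ≤ ∫ x, ψ (G (f k x)) ∂ν := by
    intro k
    rw [hPk' k, ← show (∫ x, (if G (f k x) ≤ β then (1:ℝ) else 0) ∂ν)
        = (ν {x | G (f k x) ≤ β}).toReal from
      aux_integral_ite ν (measurableSet_le (hGmeas k) measurable_const)]
    rw [← integral_sub (hint1 k) (hint2 k)]
    calc |∫ x, ((p k x).toReal - (if G (f k x) ≤ β then (1:ℝ) else 0)) ∂ν|
        ≤ ∫ x, |(p k x).toReal - (if G (f k x) ≤ β then (1:ℝ) else 0)| ∂ν := by
          simpa [Real.norm_eq_abs] using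
            norm_integral_le_integral_norm (μ := ν)
              (fun x => (p k x).toReal - (if G (f k x) ≤ β then (1:ℝ) else 0))
    _ ≤ ∫ x, ψ (G (f k x)) ∂ν :=
        integral_mono ((hint1 k).sub (hint2 k)).abs (hint3 k) (fun x => hbridge k x)
  -- rewrite the LHS integral
  have hncard : ∀ ω, ((Set.ncard {k : Fin K | Gh ω (f k (X ω)) ≤ β}) : ℝ)
      = ∑ k, (if Gh ω (f k (X ω)) ≤ β then (1:ℝ) else 0) := by
    intro ω
    classical
    simp only [Set.ncard_eq_toFinset_card', Set.toFinset_setOf]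
    rw [Finset.card_filter]
    push_cast
    exact Finset.sum_congr rfl fun k _ => by split_ifs <;> simp
  have hintind : ∀ k : Fin K,
      Integrable (fun ω => if Gh ω (f k (X ω)) ≤ β then (1:ℝ) else 0) μ := by
    intro k
    apply Integrable.mono' (integrable_const 1)
      (aux_measurable_ite (heventmeas k)).aestronglyMeasurable
    apply ae_of_all; intro ω; split_ifs <;> simp
  have hLHS : ∫ ω, ((Set.ncard {k : Fin K | Gh ω (f k (X ω)) ≤ β}) : ℝ) ∂μ
      = ∑ k, (μ {ω | Gh ω (f k (X ω)) ≤ β}).toReal := by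
    have heq : (fun ω => ((Set.ncard {k : Fin K | Gh ω (f k (X ω)) ≤ β}) : ℝ))
        = fun ω => ∑ k, (if Gh ω (f k (X ω)) ≤ β then (1:ℝ) else 0) := funext hncard
    rw [heq, integral_finset_sum _ (fun k _ => hintind k)]
    exact Finset.sum_congr rfl fun k _ => aux_integral_ite μ (heventmeas k)
  -- integrability of ψ on volume and its value
  have hg_int : Integrable (fun y : ℝ => (1 + y^2)⁻¹) volume := integrable_inv_one_add_sq
  have hψeq : ψ = fun u => 2 * (1 + ((u - β) * a⁻¹)^2)⁻¹ := by
    funext u; simp only [hψ_def, div_eq_mul_inv]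
  have hcomp1 : Integrable (fun u : ℝ => (1 + (u * a⁻¹)^2)⁻¹) volume := by
    have h := (integrable_comp_smul_iff volume (fun y : ℝ => (1 + y^2)⁻¹)
      (inv_ne_zero ha.ne')).mpr hg_int
    simpa [smul_eq_mul, mul_comm] using h
  have hcomp2 : Integrable (fun u : ℝ => (1 + ((u - β) * a⁻¹)^2)⁻¹) volume :=
    hcomp1.comp_sub_right β
  have hψint_vol : Integrable ψ volume := by
    rw [hψeq]; exact hcomp2.const_mul 2
  have hval : (∫ u, ψ u) = 2 * Real.pi * a := by
    rw [hψeq]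
    rw [integral_const_mul]
    have h1 : (∫ u : ℝ, (1 + ((u - β) * a⁻¹)^2)⁻¹)
        = ∫ u : ℝ, (1 + (u * a⁻¹)^2)⁻¹ :=
      integral_sub_right_eq_self (fun u => (1 + (u * a⁻¹)^2)⁻¹) β
    rw [h1]
    have h2 : (∫ u : ℝ, (1 + (u * a⁻¹)^2)⁻¹) = |a| • ∫ y : ℝ, (1 + y^2)⁻¹ := by
      have := MeasureTheory.Measure.integral_comp_mul_right (fun y : ℝ => (1 + y^2)⁻¹) a⁻¹
      simpa using this
    rw [h2, integral_univ_inv_one_add_sq, abs_of_pos ha, smul_eq_mul]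
    ring
  -- assemble
  rw [hLHS]
  have hsplit : (∑ k, (μ {ω | Gh ω (f k (X ω)) ≤ β}).toReal) - β
      = ∑ k, ((μ {ω | Gh ω (f k (X ω)) ≤ β}).toReal - (ν {x | G (f k x) ≤ β}).toReal) := by
    rw [Finset.sum_sub_distrib, hQ]
  rw [hsplit]
  calc |∑ k, ((μ {ω | Gh ω (f k (X ω)) ≤ β}).toReal - (ν {x | G (f k x) ≤ β}).toReal)|
      ≤ ∑ k, |(μ {ω | Gh ω (f k (X ω)) ≤ β}).toReal - (ν {x | G (f k x) ≤ β}).toReal| :=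
        Finset.abs_sum_le_sum_abs _ _
  _ ≤ ∑ k, ∫ x, ψ (G (f k x)) ∂ν := Finset.sum_le_sum (fun k _ => hdiff k)
  _ = ∑ k, ∫ u, ψ u ∂(ν.map (fun x => G (f k x))) := by
      refine Finset.sum_congr rfl fun k _ => ?_
      rw [integral_map (hGmeas k).aemeasurable hψcont.aestronglyMeasurable]
  _ = ∫ u, ψ u ∂(∑ k, ν.map (fun x => G (f k x))) := by
      rw [integral_finset_sum_measure (fun k _ =>
        (integrable_map_measure hψcont.aestronglyMeasurable
          (hGmeas k).aemeasurable).mpr (hint3 k))]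
  _ = ∫ u in Set.Ioc 0 (K:ℝ), ψ u := by rw [hlam]
  _ ≤ ∫ u, ψ u := setIntegral_le_integral hψint_vol (ae_of_all _ hψnonneg)
  _ = 2 * Real.pi * a := hval
  _ = 2 * Real.pi * K / Real.sqrt N := by rw [ha_def]; ring
end

section
/- Suppose the modulus of convexity δ(ε) of the φ-risk R_φ satisfies δ(ε) ≥ c₁ε² for some c₁ > 0, and let f̄ be the minimizer of R_φ over a convex class F. Then for every f ∈ F, ∑_{k=1}^K E_X[(f_k − f̄_k)²(X)] ≤ (1/(2c₁))·(R_φ(f) − R_φ(f̄)). -/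
open MeasureTheory

/-- If the modulus of convexity of the φ-risk satisfies `δ(ε) ≥ c₁ ε²`
(equivalently `(R_φ(f)+R_φ(g))/2 − R_φ((f+g)/2) ≥ c₁ ∑_k E_X[(f_k−g_k)²]` on the convex class
`F`), and `f̄` minimizes `R_φ` over `F`, then for every `f ∈ F`,
`∑_k E_X[(f_k − f̄_k)²] ≤ (1/(2c₁))(R_φ(f) − R_φ(f̄))`. -/
theorem strong_convexity_quadratic_bound
    {𝒳 : Type*} [MeasurableSpace 𝒳] (ν : Measure 𝒳) [IsProbabilityMeasure ν]
    (K : ℕ)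
    (F : Set (Fin K → 𝒳 → ℝ)) (hFconv : Convex ℝ F)
    (Rφ : (Fin K → 𝒳 → ℝ) → ℝ) (c1 : ℝ) (hc1 : 0 < c1)
    (hmod : ∀ f ∈ F, ∀ g ∈ F,
      c1 * ∑ k, ∫ x, (f k x - g k x) ^ 2 ∂ν
        ≤ (Rφ f + Rφ g) / 2 - Rφ (fun k x => (f k x + g k x) / 2))
    (fbar : Fin K → 𝒳 → ℝ) (hfbar : fbar ∈ F)
    (hmin : ∀ f ∈ F, Rφ fbar ≤ Rφ f)
    (f : Fin K → 𝒳 → ℝ) (hf : f ∈ F) :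
    ∑ k, ∫ x, (f k x - fbar k x) ^ 2 ∂ν ≤ (1 / (2 * c1)) * (Rφ f - Rφ fbar) := by
  have hmid : (fun k x => (f k x + fbar k x) / 2) ∈ F := by
    have h := hFconv hf hfbar (by norm_num : (0:ℝ) ≤ 1/2) (by norm_num : (0:ℝ) ≤ 1/2) (by norm_num)
    convert h using 1
    funext k x
    simp [Pi.add_apply, Pi.smul_apply, smul_eq_mul]
    ring
  have h1 := hmod f hf fbar hfbar
  have h2 := hmin _ hmid
  have h3 : c1 * ∑ k, ∫ x, (f k x - fbar k x) ^ 2 ∂ν ≤ (Rφ f - Rφ fbar) / 2 := by linarith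
  rw [div_mul_eq_mul_div, one_mul, le_div_iff₀ (by linarith)]
  linarith
end

section
/- Let φ be L-Lipschitz and suppose ∑_k E_X[(f_k − f̄_k)²] ≤ (1/(2c₁))(R_φ(f) − R_φ(f̄)) for all f ∈ F. Define h(z, f(x)) = ∑_{k=1}^K [φ(z_k f_k(x)) − φ(z_k f̄_k(x))]. Then E[h²(Z, f(X))] ≤ (K L²/(2c₁))·E[h(Z, f(X))] for every f ∈ F. -/
open MeasureTheory

/-- If `φ` is `L`-Lipschitz and the quadratic bound
`∑_k E_X[(f_k − f̄_k)²] ≤ (1/(2c₁)) E[h]` holds, where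
`h(Z, f(X)) = ∑_k [φ(Z_k f_k(X)) − φ(Z_k f̄_k(X))]` with `Z_k = 2·1{Y=k} − 1`, then
`E[h²] ≤ (K L²/(2c₁))·E[h]`. -/
theorem self_bounding_variance_condition
    {Ω 𝒳 : Type*} [MeasurableSpace Ω] [MeasurableSpace 𝒳]
    (μ : Measure Ω) [IsProbabilityMeasure μ]
    (K : ℕ) (hK : 0 < K)
    (X : Ω → 𝒳) (Y : Ω → Fin K)
    (φ : ℝ → ℝ) (L c1 : ℝ) (hL : 0 < L) (hc1 : 0 < c1)
    (hLip : ∀ a b : ℝ, |φ a - φ b| ≤ L * |a - b|)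
    (f fbar : Fin K → 𝒳 → ℝ)
    (h : Ω → ℝ)
    (hh : ∀ ω, h ω = ∑ k,
      (φ ((if Y ω = k then (1:ℝ) else -1) * f k (X ω))
        - φ ((if Y ω = k then (1:ℝ) else -1) * fbar k (X ω))))
    (hvar : ∑ k, ∫ ω, (f k (X ω) - fbar k (X ω)) ^ 2 ∂μ
      ≤ (1 / (2 * c1)) * ∫ ω, h ω ∂μ)
    (hintsq : Integrable (fun ω => (h ω) ^ 2) μ)
    (hint : Integrable h μ)
    (hintf : ∀ k, Integrable (fun ω => (f k (X ω) - fbar k (X ω)) ^ 2) μ) :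
    ∫ ω, (h ω) ^ 2 ∂μ ≤ ((K : ℝ) * L ^ 2 / (2 * c1)) * ∫ ω, h ω ∂μ := by
  have key : ∀ ω, h ω ^ 2 ≤ (K : ℝ) * L ^ 2 * ∑ k, (f k (X ω) - fbar k (X ω)) ^ 2 := by
    intro ω
    have h1 : |h ω| ≤ L * ∑ k, |f k (X ω) - fbar k (X ω)| := by
      rw [hh ω]
      calc |∑ k, (φ ((if Y ω = k then (1:ℝ) else -1) * f k (X ω))
            - φ ((if Y ω = k then (1:ℝ) else -1) * fbar k (X ω)))|
          ≤ ∑ k, |φ ((if Y ω = k then (1:ℝ) else -1) * f k (X ω))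
            - φ ((if Y ω = k then (1:ℝ) else -1) * fbar k (X ω))| :=
            Finset.abs_sum_le_sum_abs _ _
        _ ≤ ∑ k, L * |f k (X ω) - fbar k (X ω)| := by
            apply Finset.sum_le_sum
            intro k _
            refine (hLip _ _).trans ?_
            rw [← mul_sub, abs_mul]
            have : |(if Y ω = k then (1:ℝ) else -1)| = 1 := by split <;> simp
            rw [this, one_mul]
        _ = L * ∑ k, |f k (X ω) - fbar k (X ω)| := by rw [Finset.mul_sum]
    have h2 : h ω ^ 2 ≤ (L * ∑ k, |f k (X ω) - fbar k (X ω)|) ^ 2 := by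
      rw [← sq_abs (h ω)]
      exact pow_le_pow_left₀ (abs_nonneg _) h1 2
    refine h2.trans ?_
    rw [mul_pow]
    have h3 : (∑ k, |f k (X ω) - fbar k (X ω)|) ^ 2
        ≤ (K : ℝ) * ∑ k, (f k (X ω) - fbar k (X ω)) ^ 2 := by
      have := sq_sum_le_card_mul_sum_sq (s := (Finset.univ : Finset (Fin K)))
        (f := fun k => |f k (X ω) - fbar k (X ω)|)
      simpa [sq_abs] using this
    calc L ^ 2 * (∑ k, |f k (X ω) - fbar k (X ω)|) ^ 2
        ≤ L ^ 2 * ((K : ℝ) * ∑ k, (f k (X ω) - fbar k (X ω)) ^ 2) :=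
          mul_le_mul_of_nonneg_left h3 (by positivity)
      _ = (K : ℝ) * L ^ 2 * ∑ k, (f k (X ω) - fbar k (X ω)) ^ 2 := by ring
  have hintS : Integrable (fun ω => (K : ℝ) * L ^ 2 * ∑ k, (f k (X ω) - fbar k (X ω)) ^ 2) μ := by
    exact (integrable_finset_sum _ (fun k _ => hintf k)).const_mul _
  calc ∫ ω, (h ω) ^ 2 ∂μ
      ≤ ∫ ω, (K : ℝ) * L ^ 2 * ∑ k, (f k (X ω) - fbar k (X ω)) ^ 2 ∂μ :=
        integral_mono hintsq hintS key
    _ = (K : ℝ) * L ^ 2 * ∑ k, ∫ ω, (f k (X ω) - fbar k (X ω)) ^ 2 ∂μ := by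
        rw [integral_const_mul, integral_finset_sum _ (fun k _ => hintf k)]
    _ ≤ (K : ℝ) * L ^ 2 * ((1 / (2 * c1)) * ∫ ω, h ω ∂μ) :=
        mul_le_mul_of_nonneg_left hvar (by positivity)
    _ = ((K : ℝ) * L ^ 2 / (2 * c1)) * ∫ ω, h ω ∂μ := by ring
end
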